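/- arXiv:1903.01746 — 13 statements merged into one kernel-verified Lean document; each statement's English description precedes it below -/
import Mathlib

section
/- Let H be a separable complex Hilbert space and let P be a bounded idempotent operator on H (P² = P). Then 2P - I is invertible, and the absolute value |2P* - I| equals the inverse of the absolute value |2P - I|, i.e. |2P* - I| = |2P - I|⁻¹. -/
open ContinuousLinearMap

variable {H : Type*} [NormedAddCommGroup H] [InnerProductSpace ℂ H]
  [CompleteSpace H] [TopologicalSpace.SeparableSpace H]

/-- The absolute value `|A| = (A*A)^(1/2)` of a bounded operator. -/
noncomputable def absOp (A : H →L[ℂ] H) : H →L[ℂ] H := CFC.sqrt (star A * A)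

/-- A symmetry is a self-adjoint unitary: `J = J* = J⁻¹`. -/
def IsSymmetry (J : H →L[ℂ] H) : Prop := IsSelfAdjoint J ∧ J * J = 1

/-!
`T = 2P - 1` is an involution, so `T⁻¹ = T` and `(T*)⁻¹ = T*`; hence
`|T*|² = TT* = T⁻¹(T*)⁻¹ = (T*T)⁻¹ = (|T|²)⁻¹`, and the positive square root commutes with
taking inverses.
-/

theorem IsIdempotentElem.two_smul_sub_one_mul_self {𝕜 R : Type*} [CommRing 𝕜] [Ring R]
    [Algebra 𝕜 R] {p : R} (hp : IsIdempotentElem p) :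
    ((2 : 𝕜) • p - 1) * ((2 : 𝕜) • p - 1) = 1 := by
  simp only [mul_sub, sub_mul, one_mul, mul_one, smul_mul_assoc, mul_smul_comm, hp.eq]
  module

theorem isUnit_of_mul_self_eq_one {M : Type*} [Monoid M] {t : M} (ht : t * t = 1) : IsUnit t :=
  ⟨⟨t, t, ht, ht⟩, rfl⟩

theorem Ring.inverse_eq_self_of_mul_self_eq_one {M₀ : Type*} [MonoidWithZero M₀] {t : M₀}
    (ht : t * t = 1) : Ring.inverse t = t :=
  Ring.inverse_unit ⟨t, t, ht, ht⟩

theorem mul_star_self_eq_inverse_star_mul_self {R : Type*} [MonoidWithZero R] [StarMul R]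
    {t : R} (ht : t * t = 1) : t * star t = Ring.inverse (star t * t) := by
  have hst : star t * star t = 1 := by rw [← star_mul, ht, star_one]
  rw [Ring.inverse_mul (Or.inr (isUnit_of_mul_self_eq_one ht)),
    Ring.inverse_eq_self_of_mul_self_eq_one ht, Ring.inverse_eq_self_of_mul_self_eq_one hst]

theorem stmt_0 (P : H →L[ℂ] H) (hP : P * P = P) :
    IsUnit ((2 : ℂ) • P - 1) ∧
    absOp ((2 : ℂ) • star P - 1) = Ring.inverse (absOp ((2 : ℂ) • P - 1)) := by
  have hT : ((2 : ℂ) • P - 1) * ((2 : ℂ) • P - 1) = 1 :=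
    IsIdempotentElem.two_smul_sub_one_mul_self hP
  have hTstar : (2 : ℂ) • star P - 1 = star ((2 : ℂ) • P - 1) := by
    simp
  refine ⟨isUnit_of_mul_self_eq_one hT, ?_⟩
  rw [hTstar, absOp, absOp, star_star, mul_star_self_eq_inverse_star_mul_self hT,
    CFC.sqrt_ringInverse]
end

section
/- Let H be a separable complex Hilbert space and let P be a bounded idempotent operator on H. Then the operator J' := (2P - I)|2P - I|⁻¹ is a symmetry (i.e. J' = J'* = J'⁻¹), and moreover (2P - I)|2P - I|⁻¹ = (2P* - I)|2P* - I|⁻¹. -/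
/-!
`T = 2P - I` satisfies `T² = I`, so the positive operator `A = T*T` is invertible with
inverse `TT* = TAT`. Conjugation by `T` preserves the spectrum, and it preserves
self-adjointness of anything commuting with `A`; hence `T|T|T ≥ 0`, and since
`(T|T|T)² = TAT = A⁻¹` it is the square root of `A⁻¹`: `T|T|T = |T|⁻¹ = |T*|`.
Everything follows from this: `T|T|⁻¹ = |T|T = T*|T| = T*|T*|⁻¹`, the middle expressions
being adjoint to each other.
-/

open ContinuousLinearMap

variable {H : Type*} [NormedAddCommGroup H] [InnerProductSpace ℂ H]
  [CompleteSpace H] [TopologicalSpace.SeparableSpace H]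

open CFC Ring

lemma IsIdempotentElem.two_mul_sub_one_mul_self {R : Type*} [Ring R] {p : R}
    (hp : IsIdempotentElem p) : (2 * p - 1) * (2 * p - 1) = 1 :=
  calc (2 * p - 1) * (2 * p - 1) = 4 * (p * p) - 4 * p + 1 := by noncomm_ring
    _ = 1 := by rw [hp.eq]; abel

section Involution

variable {R : Type*} [Monoid R] [StarMul R] {t : R}

lemma star_mul_self_mul_mul_star_self_of_mul_self_eq_one (h : t * t = 1) :
    star t * t * (t * star t) = 1 := by
  rw [mul_assoc, ← mul_assoc t, h, one_mul, ← star_mul, h, star_one]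

lemma mul_star_self_mul_star_mul_self_of_mul_self_eq_one (h : t * t = 1) :
    t * star t * (star t * t) = 1 := by
  simpa using star_mul_self_mul_mul_star_self_of_mul_self_eq_one
    (t := star t) (by rw [← star_mul, h, star_one])

lemma isUnit_star_mul_self_of_mul_self_eq_one (h : t * t = 1) : IsUnit (star t * t) :=
  ⟨⟨star t * t, t * star t, star_mul_self_mul_mul_star_self_of_mul_self_eq_one h,
    mul_star_self_mul_star_mul_self_of_mul_self_eq_one h⟩, rfl⟩

lemma mul_star_mul_self_mul_of_mul_self_eq_one (h : t * t = 1) :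
    t * (star t * t) * t = t * star t := by
  rw [mul_assoc, mul_assoc, h, mul_one]

lemma IsSelfAdjoint.conjugate_of_mul_self_eq_one (h : t * t = 1) {x : R}
    (hx : IsSelfAdjoint x) (hxt : Commute x (star t * t)) : IsSelfAdjoint (t * x * t) := by
  have hcancel : ∀ y, t * (t * y) = y := fun y ↦ by rw [← mul_assoc, h, one_mul]
  calc star (t * x * t) = star t * t * (t * (x * (star t * t)) * t) := by
        rw [star_mul, star_mul, hx.star_eq]; simp only [mul_assoc, hcancel, h, mul_one]
    _ = star t * t * (t * (star t * t) * t) * (t * x * t) := by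
        rw [hxt.eq]; simp only [mul_assoc, hcancel]
    _ = t * x * t := by
        rw [mul_star_mul_self_mul_of_mul_self_eq_one h,
          star_mul_self_mul_mul_star_self_of_mul_self_eq_one h, one_mul]

end Involution

lemma Ring.inverse_star_mul_self_of_mul_self_eq_one {R : Type*} [MonoidWithZero R] [StarMul R]
    {t : R} (h : t * t = 1) : (star t * t)⁻¹ʳ = t * star t :=
  inverse_unit ⟨star t * t, t * star t, star_mul_self_mul_mul_star_self_of_mul_self_eq_one h,
    mul_star_self_mul_star_mul_self_of_mul_self_eq_one h⟩

section CStarAlgebra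

variable {A : Type*} [CStarAlgebra A] [PartialOrder A] [StarOrderedRing A] {t : A}

lemma conjugate_nonneg_of_mul_self_eq_one (h : t * t = 1) {x : A} (hx : 0 ≤ x)
    (hxt : Commute x (star t * t)) : 0 ≤ t * x * t := by
  let u : Aˣ := ⟨t, t, h, h⟩
  have hspec : spectrum ℝ (t * x * t) = spectrum ℝ x := spectrum.units_conjugate (u := u)
  rw [StarOrderedRing.nonneg_iff_spectrum_nonneg (R := ℝ) _
    (hx.isSelfAdjoint.conjugate_of_mul_self_eq_one h hxt), hspec]
  exact spectrum_nonneg_of_nonneg hx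

lemma sqrt_mul_star_self_of_mul_self_eq_one (h : t * t = 1) :
    sqrt (t * star t) = (sqrt (star t * t))⁻¹ʳ := by
  rw [← sqrt_ringInverse, inverse_star_mul_self_of_mul_self_eq_one h]

lemma isUnit_sqrt_star_mul_self_of_mul_self_eq_one (h : t * t = 1) :
    IsUnit (sqrt (star t * t)) :=
  (isUnit_sqrt_iff _).mpr (isUnit_star_mul_self_of_mul_self_eq_one h)

lemma mul_sqrt_star_mul_self_mul_of_mul_self_eq_one (h : t * t = 1) :
    t * sqrt (star t * t) * t = (sqrt (star t * t))⁻¹ʳ := by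
  rw [← sqrt_mul_star_self_of_mul_self_eq_one h]
  have hsq : sqrt (star t * t) * sqrt (star t * t) = star t * t := sqrt_mul_sqrt_self _
  refine (sqrt_unique ?_ (conjugate_nonneg_of_mul_self_eq_one h (sqrt_nonneg _) ?_)).symm
  · calc t * sqrt (star t * t) * t * (t * sqrt (star t * t) * t)
          = t * (sqrt (star t * t) * sqrt (star t * t)) * t := by
            simp only [mul_assoc, ← mul_assoc t t, h, one_mul]
      _ = t * star t := by rw [hsq, mul_star_mul_self_mul_of_mul_self_eq_one h]
  · simpa only [hsq] using (Commute.refl (sqrt (star t * t))).mul_right (Commute.refl _)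

lemma mul_inverse_sqrt_star_mul_self_of_mul_self_eq_one (h : t * t = 1) :
    t * (sqrt (star t * t))⁻¹ʳ = sqrt (star t * t) * t := by
  rw [← mul_sqrt_star_mul_self_mul_of_mul_self_eq_one h]
  simp only [← mul_assoc, h, one_mul]

lemma star_mul_sqrt_star_mul_self_of_mul_self_eq_one (h : t * t = 1) :
    star t * sqrt (star t * t) = sqrt (star t * t) * t := by
  set b := sqrt (star t * t)
  have hb : IsUnit b := isUnit_sqrt_star_mul_self_of_mul_self_eq_one h
  have hbtb : b * t * b = t := by
    calc b * t * b = b * (t * b * t) * t := by simp only [mul_assoc, h, mul_one]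
      _ = t := by rw [mul_sqrt_star_mul_self_mul_of_mul_self_eq_one h, mul_inverse_cancel _ hb,
          one_mul]
  calc star t * b = b * b * t * b := by
        rw [sqrt_mul_sqrt_self _ (star_mul_self_nonneg t), mul_assoc _ t t, h, mul_one]
    _ = b * t := by rw [mul_assoc b b t, mul_assoc, hbtb]

lemma isSelfAdjoint_mul_inverse_sqrt_star_mul_self_of_mul_self_eq_one (h : t * t = 1) :
    IsSelfAdjoint (t * (sqrt (star t * t))⁻¹ʳ) := by
  rw [mul_inverse_sqrt_star_mul_self_of_mul_self_eq_one h, IsSelfAdjoint, star_mul,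
    (sqrt_nonneg (star t * t)).isSelfAdjoint.star_eq,
    star_mul_sqrt_star_mul_self_of_mul_self_eq_one h]

lemma mul_inverse_sqrt_star_mul_self_mul_self_of_mul_self_eq_one (h : t * t = 1) :
    t * (sqrt (star t * t))⁻¹ʳ * (t * (sqrt (star t * t))⁻¹ʳ) = 1 := by
  nth_rw 1 [mul_inverse_sqrt_star_mul_self_of_mul_self_eq_one h]
  rw [mul_assoc, ← mul_assoc t t, h, one_mul,
    mul_inverse_cancel _ (isUnit_sqrt_star_mul_self_of_mul_self_eq_one h)]

lemma mul_inverse_sqrt_star_mul_self_eq_star_mul_of_mul_self_eq_one (h : t * t = 1) :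
    t * (sqrt (star t * t))⁻¹ʳ = star t * (sqrt (t * star t))⁻¹ʳ := by
  rw [sqrt_mul_star_self_of_mul_self_eq_one h,
    inverse_inverse (isUnit_sqrt_star_mul_self_of_mul_self_eq_one h),
    star_mul_sqrt_star_mul_self_of_mul_self_eq_one h,
    mul_inverse_sqrt_star_mul_self_of_mul_self_eq_one h]

end CStarAlgebra

theorem stmt_1 (P : H →L[ℂ] H) (hP : P * P = P) :
    IsSymmetry (((2 : ℂ) • P - 1) * Ring.inverse (absOp ((2 : ℂ) • P - 1))) ∧
    ((2 : ℂ) • P - 1) * Ring.inverse (absOp ((2 : ℂ) • P - 1)) =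
      ((2 : ℂ) • star P - 1) * Ring.inverse (absOp ((2 : ℂ) • star P - 1)) := by
  have hstar : (2 : ℂ) • star P - 1 = star ((2 : ℂ) • P - 1) := by simp [star_smul]
  have hT : ((2 : ℂ) • P - 1) * ((2 : ℂ) • P - 1) = 1 := by
    simpa only [two_smul, two_mul] using IsIdempotentElem.two_mul_sub_one_mul_self hP
  simp only [hstar, absOp, star_star]
  exact ⟨⟨isSelfAdjoint_mul_inverse_sqrt_star_mul_self_of_mul_self_eq_one hT,
    mul_inverse_sqrt_star_mul_self_mul_self_of_mul_self_eq_one hT⟩,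
    mul_inverse_sqrt_star_mul_self_eq_star_mul_of_mul_self_eq_one hT⟩
end

section
/- Let H be a separable complex Hilbert space and let P be a bounded idempotent operator on H. Then the intersection of the kernel of P with the orthogonal complement of the range of P equals the kernel of P + P*: N(P) ∩ R(P)^⊥ = N(P + P*). -/
/-!
If `(P + P†) x = 0`, then `y := P x = -P† x` is fixed by both `P` and `P†`, since both are
idempotent. Moving `P` or `P†` across the inner product then gives `⟪y, y⟫ = ⟪y, x⟫` and
`⟪y, y⟫ = -⟪y, x⟫`, so `y = 0`; hence `x ∈ ker P ⊓ ker P† = ker P ⊓ (range P)ᗮ`.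
-/

open ContinuousLinearMap

variable {H : Type*} [NormedAddCommGroup H] [InnerProductSpace ℂ H]
  [CompleteSpace H] [TopologicalSpace.SeparableSpace H]

open scoped InnerProduct

namespace ContinuousLinearMap

variable {𝕜 E : Type*} [RCLike 𝕜] [NormedAddCommGroup E] [InnerProductSpace 𝕜 E] [CompleteSpace E]
  {P : E →L[𝕜] E}

theorem apply_eq_zero_of_add_adjoint_apply_eq_zero (hP : IsIdempotentElem P) {x : E}
    (hx : (P + P†) x = 0) : P x = 0 := by
  set y := P x
  have hPx : (P†) x = -y := eq_neg_of_add_eq_zero_right hx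
  have hPy : P y = y := by simpa using congr($(hP.eq) x)
  have hPy' : (P†) y = y := by
    have h : (P†) ((P†) x) = (P†) x := congr($(hP.star.eq) x)
    rwa [hPx, map_neg, neg_inj] at h
  have h1 : inner 𝕜 y y = inner 𝕜 y x :=
    calc inner 𝕜 y (P x) = inner 𝕜 ((P†) y) x := (adjoint_inner_left P x y).symm
      _ = inner 𝕜 y x := by rw [hPy']
  have h2 : inner 𝕜 y y = -inner 𝕜 y x :=
    calc inner 𝕜 y y = -inner 𝕜 y ((P†) x) := by rw [hPx, inner_neg_right, neg_neg]
      _ = -inner 𝕜 (P y) x := by rw [adjoint_inner_right]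
      _ = -inner 𝕜 y x := by rw [hPy]
  have : inner 𝕜 y y = (0 : 𝕜) := by linear_combination (h1 + h2) / 2
  exact inner_self_eq_zero.mp this

theorem ker_add_adjoint (hP : IsIdempotentElem P) :
    (P + P†).ker = P.ker ⊓ P†.ker := by
  refine le_antisymm (fun x hx => ?_) fun x ⟨hx, hx'⟩ => ?_
  · have hPx := apply_eq_zero_of_add_adjoint_apply_eq_zero hP hx
    exact ⟨hPx, by simpa [hPx] using hx⟩
  · simp_all

end ContinuousLinearMap

theorem stmt_3 (P : H →L[ℂ] H) (hP : P * P = P) :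
    LinearMap.ker (P : H →ₗ[ℂ] H) ⊓ (LinearMap.range (P : H →ₗ[ℂ] H))ᗮ = LinearMap.ker ((P + star P : H →L[ℂ] H) : H →ₗ[ℂ] H) := by
  rw [star_eq_adjoint, ker_add_adjoint hP, orthogonal_range]
end

section
/- Let H be a separable complex Hilbert space and let P be a bounded idempotent operator on H. Then the intersection of the orthogonal complement of the kernel of P with the range of P equals the kernel of 2I - P - P*: N(P)^⊥ ∩ R(P) = N(2I - P - P*). -/
open ContinuousLinearMap

variable {H : Type*} [NormedAddCommGroup H] [InnerProductSpace ℂ H]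
  [CompleteSpace H] [TopologicalSpace.SeparableSpace H]

/-!
A vector `x` lies in `R(P)` iff `P x = x`, and it lies in `N(P)ᗮ = closure R(P*) = R(P*)` iff
`P* x = x`. On the other side, `2I - P - P* = Q + Q*` for the idempotent `Q = I - P`, and
`Q x + Q* x = 0` gives both `‖Q x‖² = ⟪Q* Q x, x⟫ = ⟪Q x, x⟫` and
`‖Q x‖² = -⟪Q x, Q* x⟫ = -⟪Q x, x⟫`, so `Q x = Q* x = 0`.
-/

namespace ContinuousLinearMap.IsIdempotentElem

variable {𝕜 E : Type*} [RCLike 𝕜] [NormedAddCommGroup E] [InnerProductSpace 𝕜 E]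
  [CompleteSpace E] {Q : E →L[𝕜] E}

theorem orthogonal_ker_eq_range_star (hQ : IsIdempotentElem Q) :
    (LinearMap.ker (Q : E →ₗ[𝕜] E))ᗮ = LinearMap.range ((star Q : E →L[𝕜] E) : E →ₗ[𝕜] E) := by
  rw [orthogonal_ker, ← star_eq_adjoint]
  exact hQ.star.isClosed_range.submodule_topologicalClosure_eq

theorem apply_eq_zero_of_add_star_apply_eq_zero (hQ : IsIdempotentElem Q) {x : E}
    (hx : Q x + star Q x = 0) : Q x = 0 := by
  have hQx : Q x = -star Q x := eq_neg_of_add_eq_zero_left hx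
  have hQQ : ∀ y, Q (Q y) = Q y := fun y => congr($hQ.eq y)
  have hQ'Q : star Q (Q x) = Q x := by
    rw [hQx, map_neg]
    exact congr(-$hQ.star.eq x)
  have h₁ : inner 𝕜 (Q x) (Q x) = inner 𝕜 (Q x) x := by
    rw [← adjoint_inner_left, ← star_eq_adjoint, hQ'Q]
  have h₂ : inner 𝕜 (Q x) (Q x) = -inner 𝕜 (Q x) x := by
    nth_rw 2 [hQx]
    rw [inner_neg_right, star_eq_adjoint, adjoint_inner_right, hQQ]
  have hQx_self : inner 𝕜 (Q x) (Q x) = (0 : 𝕜) := by linear_combination (h₁ + h₂) / 2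
  exact inner_self_eq_zero.mp hQx_self

theorem ker_add_star (hQ : IsIdempotentElem Q) :
    LinearMap.ker ((Q + star Q : E →L[𝕜] E) : E →ₗ[𝕜] E) =
      LinearMap.ker (Q : E →ₗ[𝕜] E) ⊓ LinearMap.ker ((star Q : E →L[𝕜] E) : E →ₗ[𝕜] E) := by
  ext x
  simp only [LinearMap.mem_ker, Submodule.mem_inf, coe_coe, add_apply]
  refine ⟨fun hx => ?_, fun ⟨h₁, h₂⟩ => by rw [h₁, h₂, add_zero]⟩
  have h₁ := hQ.apply_eq_zero_of_add_star_apply_eq_zero hx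
  exact ⟨h₁, by rwa [h₁, zero_add] at hx⟩

end ContinuousLinearMap.IsIdempotentElem

theorem stmt_4 (P : H →L[ℂ] H) (hP : P * P = P) :
    (LinearMap.ker (P : H →ₗ[ℂ] H))ᗮ ⊓ LinearMap.range (P : H →ₗ[ℂ] H) =
      LinearMap.ker (((2 : ℂ) • (1 : H →L[ℂ] H) - P - star P : H →L[ℂ] H) : H →ₗ[ℂ] H) := by
  have hP : IsIdempotentElem P := hP
  have hsum : (2 : ℂ) • (1 : H →L[ℂ] H) - P - star P = (1 - P) + star (1 - P) := by
    rw [star_sub, star_one, two_smul]; abel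
  rw [hsum, hP.one_sub.ker_add_star, hP.orthogonal_ker_eq_range_star, star_sub, star_one,
    toLinearMap_sub, toLinearMap_sub, toLinearMap_one,
    ← LinearMap.IsIdempotentElem.range_eq_ker_one_sub hP.toLinearMap,
    ← LinearMap.IsIdempotentElem.range_eq_ker_one_sub hP.star.toLinearMap, inf_comm]
end

section
/- Let H be a separable complex Hilbert space and let P be a bounded idempotent operator on H. If there exists a symmetry J with JPJ = I - P, then the Hilbert space dimension of the range of P equals the Hilbert space dimension of the orthogonal complement of the range of P. -/
open ContinuousLinearMap

variable {H : Type*} [NormedAddCommGroup H] [InnerProductSpace ℂ H]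
  [CompleteSpace H] [TopologicalSpace.SeparableSpace H]

/-!
`J` is unitary and `JP = (1 - P)J`, so `J` maps `R(P)` isometrically onto `ker P = R(1 - P)`,
and hence `R(P)ᗮ` onto `(ker P)ᗮ`. Both `R(P)` and `(ker P)ᗮ` are topological complements of
`ker P`, so they are isomorphic as Banach spaces; the unitary part of the polar decomposition
of such an isomorphism turns it into an isometric one. Hence `R(P) ≅ (ker P)ᗮ ≅ R(P)ᗮ`.
-/

theorem ContinuousLinearMap.map_range_eq_ker_of_mul_mul_eq_one_sub {R M : Type*} [Ring R]
    [TopologicalSpace M] [AddCommGroup M] [Module R M] [IsTopologicalAddGroup M]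
    {J P : M →L[R] M} (hP : IsIdempotentElem P) (hJ : J * J = 1) (hJP : J * P * J = 1 - P) :
    (LinearMap.range (P : M →ₗ[R] M)).map (J : M →ₗ[R] M) =
      LinearMap.ker (P : M →ₗ[R] M) := by
  have hJP' : J * P = (1 - P) * J := by rw [← hJP, mul_assoc _ J, hJ, mul_one]
  have hJ_surj : LinearMap.range (J : M →ₗ[R] M) = ⊤ :=
    LinearMap.range_eq_top.2 fun x ↦ ⟨J x, congr($hJ x)⟩
  calc (LinearMap.range (P : M →ₗ[R] M)).map (J : M →ₗ[R] M)
      = LinearMap.range (((1 - P : M →L[R] M) : M →ₗ[R] M) ∘ₗ (J : M →ₗ[R] M)) := by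
        rw [← LinearMap.range_comp]
        exact congr(LinearMap.range ($hJP' : M →ₗ[R] M))
    _ = LinearMap.ker (P : M →ₗ[R] M) := by
        rw [LinearMap.range_comp_of_range_eq_top _ hJ_surj,
          LinearMap.IsIdempotentElem.ker_eq_range_one_sub hP.toLinearMap]
        rfl

noncomputable def Submodule.IsTopCompl.complEquiv {R M : Type*} [Ring R] [TopologicalSpace M]
    [AddCommGroup M] [IsTopologicalAddGroup M] [Module R M] {p q q' : Submodule R M}
    (h : IsTopCompl p q) (h' : IsTopCompl p q') : q ≃L[R] q' :=
  (quotientEquivOfIsTopCompl p q h).symm.trans (quotientEquivOfIsTopCompl p q' h')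

section Hilbert

variable {E F : Type*} [NormedAddCommGroup E] [InnerProductSpace ℂ E] [CompleteSpace E]
  [NormedAddCommGroup F] [InnerProductSpace ℂ F] [CompleteSpace F]

theorem IsSymmetry.mem_unitary {J : E →L[ℂ] E} (hJ : IsSymmetry J) :
    J ∈ unitary (E →L[ℂ] E) := by
  rw [Unitary.mem_iff, hJ.1.star_eq, and_self]
  exact hJ.2

theorem ContinuousLinearEquiv.isUnit_adjoint_comp_self (T : E ≃L[ℂ] F) :
    IsUnit (adjoint (T : E →L[ℂ] F) ∘L (T : E →L[ℂ] F)) := by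
  have h₁ : adjoint (T : E →L[ℂ] F) ∘L adjoint (T.symm : F →L[ℂ] E) = 1 := by
    rw [← adjoint_comp, T.coe_symm_comp_coe, adjoint_id, one_def]
  have h₂ : adjoint (T.symm : F →L[ℂ] E) ∘L adjoint (T : E →L[ℂ] F) = 1 := by
    rw [← adjoint_comp, T.coe_comp_coe_symm, adjoint_id, one_def]
  refine ⟨⟨_, (T.symm : F →L[ℂ] E) ∘L adjoint (T.symm : F →L[ℂ] E), ?_, ?_⟩, rfl⟩
  · ext x
    simpa using congr($h₁ x)
  · ext x
    simp [show adjoint (T.symm : F →L[ℂ] E) (adjoint (T : E →L[ℂ] F) (T x)) = T x from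
      congr($h₂ (T x))]

/-- Polar decomposition: with `R = √(T† T)`, the operator `T R⁻¹` is unitary. -/
theorem ContinuousLinearEquiv.nonempty_linearIsometryEquiv (T : E ≃L[ℂ] F) :
    Nonempty (E ≃ₗᵢ[ℂ] F) := by
  set A : E →L[ℂ] E := adjoint (T : E →L[ℂ] F) ∘L T
  have hA_nonneg : 0 ≤ A :=
    (nonneg_iff_isPositive _).2 (T : E →L[ℂ] F).isPositive_adjoint_comp_self
  obtain ⟨R, hR⟩ := (CFC.isUnit_sqrt_iff A).2 T.isUnit_adjoint_comp_self
  have hRR : (R : E →L[ℂ] E) * R = A := hR ▸ CFC.sqrt_mul_sqrt_self A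
  have hR_star : star R = R := Units.ext <| by
    rw [Units.coe_star, hR]
    exact (IsSelfAdjoint.of_nonneg (CFC.sqrt_nonneg A)).star_eq
  have hR_inv_star : star (↑R⁻¹ : E →L[ℂ] E) = ↑R⁻¹ := by
    rw [← Units.coe_star_inv, hR_star]
  let U : E ≃L[ℂ] F := (unitsEquiv ℂ E R).symm.trans T
  have hU : adjoint (U : E →L[ℂ] F) ∘L (U : E →L[ℂ] F) = 1 :=
    calc adjoint (U : E →L[ℂ] F) ∘L (U : E →L[ℂ] F)
        = star (↑R⁻¹ : E →L[ℂ] E) * A * ↑R⁻¹ := by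
          rw [show (U : E →L[ℂ] F) = (T : E →L[ℂ] F) ∘L ↑R⁻¹ from rfl, adjoint_comp,
            star_eq_adjoint]
          rfl
      _ = 1 := by
          rw [hR_inv_star, ← hRR, mul_assoc, Units.mul_inv_cancel_right, Units.inv_mul]
  exact ⟨{ U.toLinearEquiv with norm_map' := (norm_map_iff_adjoint_comp_self _).2 hU }⟩

end Hilbert

theorem stmt_6 (P : H →L[ℂ] H) (hP : P * P = P)
    (h : ∃ J, IsSymmetry J ∧ J * P * J = 1 - P) :
    Nonempty ((LinearMap.range (P : H →ₗ[ℂ] H) : Submodule ℂ H) ≃ₗᵢ[ℂ]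
      ((LinearMap.range (P : H →ₗ[ℂ] H))ᗮ : Submodule ℂ H)) := by
  obtain ⟨J, hJ, hJP⟩ := h
  let U : H ≃ₗᵢ[ℂ] H := Unitary.linearIsometryEquiv ⟨J, hJ.mem_unitary⟩
  have hU_range : (LinearMap.range (P : H →ₗ[ℂ] H)).map (U.toLinearEquiv : H →ₗ[ℂ] H) =
      LinearMap.ker (P : H →ₗ[ℂ] H) :=
    map_range_eq_ker_of_mul_mul_eq_one_sub hP hJ.2 hJP
  have hU_orth :
      ((LinearMap.range (P : H →ₗ[ℂ] H))ᗮ).map (U.toLinearEquiv : H →ₗ[ℂ] H) =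
        (LinearMap.ker (P : H →ₗ[ℂ] H))ᗮ := by
    rw [Submodule.map_orthogonal_equiv, hU_range]
  have : CompleteSpace (LinearMap.range (P : H →ₗ[ℂ] H)) :=
    (IsIdempotentElem.isClosed_range hP).completeSpace_coe
  obtain ⟨e⟩ := (IsIdempotentElem.isTopCompl hP).symm.complEquiv
    (Submodule.isTopCompl_orthogonal _) |>.nonempty_linearIsometryEquiv
  exact ⟨e.trans ((U.submoduleMap _).trans (.ofEq _ _ hU_orth)).symm⟩
end

section
/- Let H be a separable complex Hilbert space and let P be a bounded idempotent operator on H. Then P + P* - I is invertible with inverse (P + P* - I)⁻¹ = P_{R(P)} - P_{N(P)}, where P_{R(P)} and P_{N(P)} are the orthogonal projections onto the range and kernel of P respectively; moreover P = P_{R(P)}(P_{R(P)} - P_{N(P)})⁻¹ and P_{N(P)} = -(I - P)(P + P* - I)⁻¹. -/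
open ContinuousLinearMap

variable {H : Type*} [NormedAddCommGroup H] [InnerProductSpace ℂ H]
  [CompleteSpace H] [TopologicalSpace.SeparableSpace H]

/-- `Q` is the orthogonal projection onto the (closed) subspace `M`. -/
def IsOrthoProjOnto (Q : H →L[ℂ] H) (M : Submodule ℂ H) : Prop :=
  IsSelfAdjoint Q ∧ Q * Q = Q ∧ LinearMap.range (Q : H →ₗ[ℂ] H) = M

/-! With `Q = P_{R(P)}` and `N = P_{N(P)}`, the range and kernel inclusions give
`P Q = Q`, `Q P = P`, `P N = 0` and `N (1 - P) = 1 - P`. Their adjoints (`Q`, `N` being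
self-adjoint) give the products of `Q` and `N` with `P*`, and then `(P + P* - 1)(Q - N) = 1` and
`(Q - N)(P + P* - 1) = 1` are pure ring computations. -/

theorem Ring.inverse_eq_of_mul_eq_one {M₀ : Type*} [MonoidWithZero M₀] {a b : M₀}
    (hab : a * b = 1) (hba : b * a = 1) : Ring.inverse a = b :=
  Ring.inverse_unit ⟨a, b, hab, hba⟩

theorem mul_eq_add_sub_one_of_mul_one_sub {R : Type*} [Ring R] {P N : R}
    (h : N * (1 - P) = 1 - P) : N * P = N + P - 1 := by
  rw [mul_sub, mul_one] at h
  linear_combination (norm := abel) -h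

section StarRing

variable {R : Type*} [Ring R] [StarRing R] {P Q N : R}

theorem add_star_sub_one_mul_sub_eq_one (hPQ : P * Q = Q) (hQP : Q * P = P) (hPN : P * N = 0)
    (hNP : N * (1 - P) = 1 - P) (hQ : IsSelfAdjoint Q) (hN : IsSelfAdjoint N) :
    (P + star P - 1) * (Q - N) = 1 := by
  have hPQ' : star P * Q = star P := by simpa [hQ.star_eq] using congrArg star hQP
  have hPN' : star P * N = N + star P - 1 := by
    simpa [hN.star_eq] using congrArg star (mul_eq_add_sub_one_of_mul_one_sub hNP)
  rw [sub_mul, add_mul, mul_sub, mul_sub, hPQ, hPN, hPQ', hPN', one_mul]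
  abel

theorem sub_mul_add_star_sub_one_eq_one (hPQ : P * Q = Q) (hQP : Q * P = P) (hPN : P * N = 0)
    (hNP : N * (1 - P) = 1 - P) (hQ : IsSelfAdjoint Q) (hN : IsSelfAdjoint N) :
    (Q - N) * (P + star P - 1) = 1 := by
  have hQP' : Q * star P = Q := by simpa [hQ.star_eq] using congrArg star hPQ
  have hNP' : N * star P = 0 := by simpa [hN.star_eq] using congrArg star hPN
  rw [mul_sub, sub_mul, sub_mul, mul_add, mul_add, hQP, hQP', hNP', mul_one, mul_one,
    mul_eq_add_sub_one_of_mul_one_sub hNP]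
  abel

end StarRing

namespace ContinuousLinearMap

section Semiring

variable {R M : Type*} [Semiring R] [TopologicalSpace M] [AddCommMonoid M] [Module R M]

theorem IsIdempotentElem.mul_eq_right_iff {P Q : M →L[R] M} (hP : IsIdempotentElem P) :
    P * Q = Q ↔ LinearMap.range (Q : M →ₗ[R] M) ≤ LinearMap.range (P : M →ₗ[R] M) := by
  rw [← LinearMap.IsIdempotentElem.comp_eq_right_iff hP.toLinearMap, ← toLinearMap_comp, coe_inj,
    mul_def]

theorem mul_eq_zero_of_range_le_ker {P Q : M →L[R] M}
    (h : LinearMap.range (Q : M →ₗ[R] M) ≤ LinearMap.ker (P : M →ₗ[R] M)) : P * Q = 0 := by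
  rwa [LinearMap.range_le_ker_iff, ← toLinearMap_comp, ← toLinearMap_zero, coe_inj] at h

end Semiring

theorem IsIdempotentElem.ker_eq_range_one_sub {R M : Type*} [Ring R] [TopologicalSpace M]
    [AddCommGroup M] [IsTopologicalAddGroup M] [Module R M] {P : M →L[R] M}
    (hP : IsIdempotentElem P) :
    LinearMap.ker (P : M →ₗ[R] M) = LinearMap.range ((1 - P : M →L[R] M) : M →ₗ[R] M) := by
  simpa using LinearMap.IsIdempotentElem.ker_eq_range_one_sub hP.toLinearMap

end ContinuousLinearMap

theorem stmt_7 (P PR PN : H →L[ℂ] H) (hP : P * P = P)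
    (hPR : IsOrthoProjOnto PR (LinearMap.range (P : H →ₗ[ℂ] H)))
    (hPN : IsOrthoProjOnto PN (LinearMap.ker (P : H →ₗ[ℂ] H))) :
    IsUnit (P + star P - 1) ∧
    Ring.inverse (P + star P - 1) = PR - PN ∧
    P = PR * Ring.inverse (PR - PN) ∧
    PN = -((1 - P) * Ring.inverse (P + star P - 1)) := by
  obtain ⟨hPR_sa, hPR_idem, hPR_range⟩ := hPR
  obtain ⟨hPN_sa, hPN_idem, hPN_range⟩ := hPN
  have hP_PR : P * PR = PR := (IsIdempotentElem.mul_eq_right_iff hP).2 hPR_range.le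
  have hPR_P : PR * P = P := (IsIdempotentElem.mul_eq_right_iff hPR_idem).2 hPR_range.ge
  have hP_PN : P * PN = 0 := mul_eq_zero_of_range_le_ker hPN_range.le
  have hPN_P : PN * (1 - P) = 1 - P := (IsIdempotentElem.mul_eq_right_iff hPN_idem).2
    (hPN_range ▸ (IsIdempotentElem.ker_eq_range_one_sub hP).ge)
  have hmul := add_star_sub_one_mul_sub_eq_one hP_PR hPR_P hP_PN hPN_P hPR_sa hPN_sa
  have hmul' := sub_mul_add_star_sub_one_eq_one hP_PR hPR_P hP_PN hPN_P hPR_sa hPN_sa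
  have hinv := Ring.inverse_eq_of_mul_eq_one hmul hmul'
  refine ⟨⟨⟨_, _, hmul, hmul'⟩, rfl⟩, hinv, ?_, ?_⟩
  · have hPR_P' : PR * star P = PR := by simpa [hPR_sa.star_eq] using congrArg star hP_PR
    rw [Ring.inverse_eq_of_mul_eq_one hmul' hmul, mul_sub, mul_add, hPR_P, hPR_P', mul_one]
    abel
  · rw [hinv, sub_mul, one_mul, mul_sub, hP_PR, hP_PN]
    abel
end

section
/- Let H be a separable complex Hilbert space, let P and Q be bounded idempotent operators on H, and let U be a unitary operator on H. Then the following statements are equivalent: (i) U P U* = Q; (ii) U P_{R(P)} U* = P_{R(Q)} and U P_{N(P)} U* = P_{N(Q)}; (iii) U (P_{R(P)} - P_{N(P)}) U* = P_{R(Q)} - P_{N(Q)} and U (P - P*) U* = Q - Q*. -/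
/-!
Write `e`, `n` for the orthogonal projections onto the range and the kernel of an idempotent `p`.
They are characterised algebraically by `e * p = p`, `p * e = e`, `n * (1 - p) = 1 - p`,
`(1 - p) * n = n`, so they are determined by `p` and, conversely, determine it. Since conjugation
by a unitary is a ⋆-automorphism, this gives (i) ⇔ (ii). For (iii), the identity
`(e - n) * (p + p* - 1) = 1` shows that `e - n` determines `p + p*`; together with `p - p*` this
recovers `2 p`.
-/

open ContinuousLinearMap

variable {H : Type*} [NormedAddCommGroup H] [InnerProductSpace ℂ H]
  [CompleteSpace H] [TopologicalSpace.SeparableSpace H]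

/-- `e` is the orthogonal projection onto the range of the idempotent `p`, in algebraic form. -/
structure IsRangeProjection {R : Type*} [Mul R] [Star R] (e p : R) : Prop where
  isStarProjection : IsStarProjection e
  mul_right : e * p = p
  mul_left : p * e = e

section StarRing

variable {R S F : Type*}

theorem IsRangeProjection.eq [Semigroup R] [StarMul R] {e f p : R}
    (he : IsRangeProjection e p) (hf : IsRangeProjection f p) : e = f := by
  have hef : e * f = f := by rw [← hf.mul_left, ← mul_assoc, he.mul_right]
  have hfe : f * e = e := by rw [← he.mul_left, ← mul_assoc, hf.mul_right]
  calc e = f * e := hfe.symm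
    _ = star (e * f) := by
      rw [star_mul, he.isStarProjection.isSelfAdjoint.star_eq,
        hf.isStarProjection.isSelfAdjoint.star_eq]
    _ = f := by rw [hef, hf.isStarProjection.isSelfAdjoint.star_eq]

theorem IsRangeProjection.map [Mul R] [Star R] [Mul S] [Star S] [FunLike F R S]
    [MulHomClass F R S] [StarHomClass F R S] {e p : R} (h : IsRangeProjection e p) (φ : F) :
    IsRangeProjection (φ e) (φ p) where
  isStarProjection := h.isStarProjection.map φ
  mul_right := by rw [← map_mul, h.mul_right]
  mul_left := by rw [← map_mul, h.mul_left]

variable [Ring R] [StarRing R] {e n p q : R}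

theorem IsIdempotentElem.eq_of_isRangeProjection (hq : IsIdempotentElem q)
    (hep : IsRangeProjection e p) (hnp : IsRangeProjection n (1 - p))
    (heq : IsRangeProjection e q) (hnq : IsRangeProjection n (1 - q)) : p = q := by
  have hqn : q * n = 0 := by
    rw [← hnq.mul_left, ← mul_assoc, mul_sub, mul_one, hq.eq, sub_self, zero_mul]
  have hqp : q * p = p := by rw [← hep.mul_right, ← mul_assoc, heq.mul_left]
  have hq_one_sub : q * (1 - p) = 0 := by rw [← hnp.mul_right, ← mul_assoc, hqn, zero_mul]
  rw [mul_sub, mul_one, hqp, sub_eq_zero] at hq_one_sub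
  exact hq_one_sub.symm

theorem IsRangeProjection.sub_mul_add_star_sub_one (hp : IsIdempotentElem p)
    (he : IsRangeProjection e p) (hn : IsRangeProjection n (1 - p)) :
    (e - n) * (p + star p - 1) = 1 := by
  have he_star : e * star p = e := by
    simpa [he.isStarProjection.isSelfAdjoint.star_eq] using congrArg star he.mul_left
  have hn_star : n * star p = 0 := by
    have hpn : p * n = 0 := by
      rw [← hn.mul_left, ← mul_assoc, mul_sub, mul_one, hp.eq, sub_self, zero_mul]
    simpa [hn.isStarProjection.isSelfAdjoint.star_eq] using congrArg star hpn
  calc (e - n) * (p + star p - 1) = e * p + e * star p - e - n * star p + n * (1 - p) := by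
        noncomm_ring
    _ = 1 := by rw [he.mul_right, he_star, hn_star, hn.mul_right]; abel

theorem IsRangeProjection.add_star_sub_one_mul_sub (hp : IsIdempotentElem p)
    (he : IsRangeProjection e p) (hn : IsRangeProjection n (1 - p)) :
    (p + star p - 1) * (e - n) = 1 := by
  simpa [he.isStarProjection.isSelfAdjoint.star_eq, hn.isStarProjection.isSelfAdjoint.star_eq,
    add_comm] using congrArg star (he.sub_mul_add_star_sub_one hp hn)

variable [Ring S] [StarRing S] [FunLike F R S] [RingHomClass F R S] [StarHomClass F R S]
  {f m q : S}

theorem map_eq_iff_map_isRangeProjection_eq (φ : F) (hq : IsIdempotentElem q)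
    (he : IsRangeProjection e p) (hn : IsRangeProjection n (1 - p))
    (hf : IsRangeProjection f q) (hm : IsRangeProjection m (1 - q)) :
    φ p = q ↔ φ e = f ∧ φ n = m := by
  have hφn : IsRangeProjection (φ n) (1 - φ p) := by simpa using hn.map φ
  constructor
  · intro hφp
    exact ⟨(hφp ▸ he.map φ).eq hf, (hφp ▸ hφn).eq hm⟩
  · rintro ⟨hφe, hφn_eq⟩
    exact hq.eq_of_isRangeProjection (he.map φ) hφn (hφe ▸ hf) (hφn_eq ▸ hm)

theorem map_eq_iff_map_sub_eq [IsAddTorsionFree S] (φ : F) (hp : IsIdempotentElem p)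
    (hq : IsIdempotentElem q) (he : IsRangeProjection e p) (hn : IsRangeProjection n (1 - p))
    (hf : IsRangeProjection f q) (hm : IsRangeProjection m (1 - q)) :
    φ p = q ↔ φ (e - n) = f - m ∧ φ (p - star p) = q - star q := by
  refine ⟨fun h ↦ ?_, ?_⟩
  · obtain ⟨hφe, hφn⟩ := (map_eq_iff_map_isRangeProjection_eq φ hq he hn hf hm).mp h
    simp [h, hφe, hφn, map_star]
  · rintro ⟨hφen, hφp_skew⟩
    -- `q + q* - 1` is a left and `φ (p + p* - 1)` a right inverse of `f - m = φ (e - n)`.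
    have hφp_sym : φ (p + star p - 1) = q + star q - 1 := by
      refine (left_inv_eq_right_inv (hf.add_star_sub_one_mul_sub hq hm) ?_).symm
      rw [← hφen, ← map_mul, he.sub_mul_add_star_sub_one hp hn, map_one]
    simp only [map_sub, map_add, map_one, map_star, sub_left_inj] at hφp_sym hφp_skew
    apply nsmul_right_injective (M := S) two_ne_zero
    simp only [two_nsmul]
    calc φ p + φ p = (φ p + star (φ p)) + (φ p - star (φ p)) := by abel
      _ = q + q := by rw [hφp_sym, hφp_skew]; abel

end StarRing

theorem IsIdempotentElem.mul_eq_right_of_range_le {R M : Type*} [Semiring R] [TopologicalSpace M]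
    [AddCommMonoid M] [Module R M] {e x : M →L[R] M} (he : IsIdempotentElem e)
    (h : LinearMap.range (x : M →ₗ[R] M) ≤ LinearMap.range (e : M →ₗ[R] M)) : e * x = x :=
  coe_injective <|
    (LinearMap.IsIdempotentElem.comp_eq_right_iff (IsIdempotentElem.toLinearMap he) _).mpr h

section InnerProductSpace

variable {E : Type*} [NormedAddCommGroup E] [InnerProductSpace ℂ E] [CompleteSpace E]
  {e p : E →L[ℂ] E}

theorem IsOrthoProjOnto.isRangeProjection (hp : IsIdempotentElem p)
    (he : IsOrthoProjOnto e (LinearMap.range (p : E →ₗ[ℂ] E))) : IsRangeProjection e p :=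
  have he_idem : IsIdempotentElem e := he.2.1
  { isStarProjection := ⟨he_idem, he.1⟩
    mul_right := he_idem.mul_eq_right_of_range_le he.2.2.ge
    mul_left := hp.mul_eq_right_of_range_le he.2.2.le }

theorem IsOrthoProjOnto.isRangeProjection_one_sub (hp : IsIdempotentElem p)
    (he : IsOrthoProjOnto e (LinearMap.ker (p : E →ₗ[ℂ] E))) :
    IsRangeProjection e (1 - p) := by
  refine IsOrthoProjOnto.isRangeProjection hp.one_sub ?_
  rwa [toLinearMap_sub, toLinearMap_one,
    ← LinearMap.IsIdempotentElem.ker_eq_range_one_sub (IsIdempotentElem.toLinearMap hp)]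

end InnerProductSpace

theorem stmt_8 (P Q PR PN QR QN U : H →L[ℂ] H) (hP : P * P = P) (hQ : Q * Q = Q)
    (hU : U ∈ unitary (H →L[ℂ] H))
    (hPR : IsOrthoProjOnto PR (LinearMap.range (P : H →ₗ[ℂ] H)))
    (hPN : IsOrthoProjOnto PN (LinearMap.ker (P : H →ₗ[ℂ] H)))
    (hQR : IsOrthoProjOnto QR (LinearMap.range (Q : H →ₗ[ℂ] H)))
    (hQN : IsOrthoProjOnto QN (LinearMap.ker (Q : H →ₗ[ℂ] H))) :
    ((U * P * star U = Q) ↔ (U * PR * star U = QR ∧ U * PN * star U = QN)) ∧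
    ((U * PR * star U = QR ∧ U * PN * star U = QN) ↔
      (U * (PR - PN) * star U = QR - QN ∧ U * (P - star P) * star U = Q - star Q)) := by
  have : IsAddTorsionFree (H →L[ℂ] H) := .of_isTorsionFree ℂ _
  let φ := Unitary.conjStarAlgAut ℂ (H →L[ℂ] H) ⟨U, hU⟩
  have hPR' := hPR.isRangeProjection hP
  have hPN' := hPN.isRangeProjection_one_sub hP
  have hQR' := hQR.isRangeProjection hQ
  have hQN' := hQN.isRangeProjection_one_sub hQ
  have hii := map_eq_iff_map_isRangeProjection_eq φ hQ hPR' hPN' hQR' hQN'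
  exact ⟨hii, hii.symm.trans (map_eq_iff_map_sub_eq φ hP hQ hPR' hPN' hQR' hQN')⟩
end

section
/- Let H and K be separable complex Hilbert spaces and let A be a bounded linear operator from H to K. Then there exists a unitary operator U from K to H such that UA is self-adjoint if and only if the Hilbert space dimension of the kernel of A equals the Hilbert space dimension of the kernel of A*. -/
/-!
If `U` is unitary and `UA` is self-adjoint, then `A* U* = (UA)* = UA`, so `U*` carries `ker A`
isometrically onto `ker A*`. Conversely, `|A| = √(A*A)` satisfies `‖|A| x‖ = ‖A x‖`, so
`|A| x ↦ A x` extends to an isometry from `closure (range |A|) = (ker A)ᗮ` onto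
`closure (range A) = (ker A*)ᗮ`. Together with an isometry `ker A ≃ ker A*` this gives a unitary
`W` with `W |A| = A` (polar decomposition), and `U = W⁻¹` makes `UA = |A|` self-adjoint.
-/

open ContinuousLinearMap

section NormEq

open LinearMap

variable {𝕜 E F G : Type*} [NormedField 𝕜] [AddCommGroup E] [Module 𝕜 E]
  [NormedAddCommGroup F] [NormedSpace 𝕜 F] [NormedAddCommGroup G] [NormedSpace 𝕜 G]

theorem LinearMap.ker_eq_ker_of_norm_eq {T : E →ₗ[𝕜] F} {S : E →ₗ[𝕜] G}
    (h : ∀ x, ‖T x‖ = ‖S x‖) : ker T = ker S := by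
  ext x
  rw [mem_ker, mem_ker, ← norm_eq_zero, h, norm_eq_zero]

theorem Submodule.denseRange_inclusion_le_topologicalClosure (p : Submodule 𝕜 F) :
    DenseRange (Submodule.inclusion p.le_topologicalClosure) :=
  (denseRange_inclusion_iff p.le_topologicalClosure).2 (by simp [Submodule.topologicalClosure_coe])

theorem LinearMap.exists_linearIsometryEquiv_closure_range [CompleteSpace F] [CompleteSpace G]
    {T : E →ₗ[𝕜] F} {S : E →ₗ[𝕜] G} (h : ∀ x, ‖T x‖ = ‖S x‖) :
    ∃ e : (range T).topologicalClosure ≃ₗᵢ[𝕜] (range S).topologicalClosure,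
      ∀ x, (e ⟨T x, (range T).le_topologicalClosure (mem_range_self T x)⟩ : G) = S x := by
  let f : range T ≃ₗ[𝕜] range S := T.quotKerEquivRange.symm ≪≫ₗ
    Submodule.quotEquivOfEq _ _ (ker_eq_ker_of_norm_eq h) ≪≫ₗ S.quotKerEquivRange
  have hf : ∀ x, f ⟨T x, mem_range_self T x⟩ = ⟨S x, mem_range_self S x⟩ := fun x => by
    ext
    simp [f, quotKerEquivRange_symm_apply_image]
  have hnorm : ∀ y, ‖Submodule.inclusion (range S).le_topologicalClosure (f y)‖ =
      ‖Submodule.inclusion (range T).le_topologicalClosure y‖ := by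
    rintro ⟨_, x, rfl⟩
    simp [hf, h]
  refine ⟨f.extendOfIsometry _ _ (range T).denseRange_inclusion_le_topologicalClosure
    (range S).denseRange_inclusion_le_topologicalClosure hnorm, fun x => ?_⟩
  have := f.extendOfIsometry_eq _ _ (range T).denseRange_inclusion_le_topologicalClosure
    (range S).denseRange_inclusion_le_topologicalClosure hnorm ⟨T x, mem_range_self T x⟩
  rw [hf] at this
  exact congrArg Subtype.val this

end NormEq

section InnerProduct

variable {𝕜 E F G : Type*} [RCLike 𝕜]
  [NormedAddCommGroup E] [InnerProductSpace 𝕜 E] [NormedAddCommGroup F] [InnerProductSpace 𝕜 F]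

namespace LinearIsometryEquiv

variable {M : Submodule 𝕜 E} {N : Submodule 𝕜 F} [M.HasOrthogonalProjection]
  [N.HasOrthogonalProjection]

noncomputable def orthogonalSum (e₁ : M ≃ₗᵢ[𝕜] N) (e₂ : Mᗮ ≃ₗᵢ[𝕜] Nᗮ) : E ≃ₗᵢ[𝕜] F :=
  M.orthogonalDecomposition.trans ((e₁.withLpProdCongr 2 e₂).trans N.orthogonalDecomposition.symm)

theorem orthogonalSum_apply_of_mem_orthogonal (e₁ : M ≃ₗᵢ[𝕜] N) (e₂ : Mᗮ ≃ₗᵢ[𝕜] Nᗮ) {x : E}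
    (hx : x ∈ Mᗮ) : orthogonalSum e₁ e₂ x = e₂ ⟨x, hx⟩ := by
  simp [orthogonalSum, Submodule.orthogonalProjectionOnto_apply_of_mem_orthogonal hx,
    Submodule.orthogonalProjectionOnto_mem_subspace_eq_self (⟨x, hx⟩ : Mᗮ)]

end LinearIsometryEquiv

variable [CompleteSpace E] [CompleteSpace F]

theorem LinearIsometryEquiv.map_ker_symm_eq_ker_adjoint (U : F ≃ₗᵢ[𝕜] E) {A : E →L[𝕜] F}
    (h : IsSelfAdjoint ((U : F →L[𝕜] E) ∘L A)) :
    A.ker.map (U.symm : E →ₗ[𝕜] F) = (adjoint A).ker := by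
  have hA : ∀ y, adjoint A y = U (A (U y)) := fun y => by
    have := congr($(isSelfAdjoint_iff'.mp h) (U y))
    simpa [adjoint_comp] using this
  ext y
  rw [Submodule.mem_map_equiv]
  simp [hA]

noncomputable def ContinuousLinearMap.linearIsometryEquivOfUnitary (U : F →L[𝕜] E)
    (h₁ : U ∘L adjoint U = ContinuousLinearMap.id 𝕜 E)
    (h₂ : adjoint U ∘L U = ContinuousLinearMap.id 𝕜 F) : F ≃ₗᵢ[𝕜] E :=
  { ContinuousLinearEquiv.equivOfInverse' U (adjoint U) h₁ h₂ with
    norm_map' := (norm_map_iff_adjoint_comp_self U).2 h₂ }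

theorem ContinuousLinearMap.norm_apply_eq_of_adjoint_comp_self_eq [NormedAddCommGroup G]
    [InnerProductSpace 𝕜 G] [CompleteSpace G] {T : E →L[𝕜] G} {A : E →L[𝕜] F}
    (h : adjoint T ∘L T = adjoint A ∘L A) (x : E) : ‖T x‖ = ‖A x‖ := by
  have := apply_norm_sq_eq_inner_adjoint_left T x
  rw [h, ← apply_norm_sq_eq_inner_adjoint_left] at this
  exact (sq_eq_sq₀ (norm_nonneg _) (norm_nonneg _)).1 this

theorem ContinuousLinearMap.exists_linearIsometryEquiv_apply_eq_of_norm_eq {T : E →L[𝕜] E}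
    (hT : IsSelfAdjoint T) {A : E →L[𝕜] F} (h : ∀ x, ‖T x‖ = ‖A x‖)
    (φ : A.ker ≃ₗᵢ[𝕜] (adjoint A).ker) : ∃ W : E ≃ₗᵢ[𝕜] F, ∀ x, W (T x) = A x := by
  have hT' : A.kerᗮ = T.range.topologicalClosure := by
    rw [← LinearMap.ker_eq_ker_of_norm_eq h, orthogonal_ker, hT.adjoint_eq]
  have hA' : (adjoint A).kerᗮ = A.range.topologicalClosure := by
    rw [orthogonal_ker, adjoint_adjoint]
  obtain ⟨e, he⟩ := LinearMap.exists_linearIsometryEquiv_closure_range (T := (T : E →ₗ[𝕜] E))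
    (S := (A : E →ₗ[𝕜] F)) h
  refine ⟨φ.orthogonalSum ((LinearIsometryEquiv.ofEq _ _ hT').trans
    (e.trans (LinearIsometryEquiv.ofEq _ _ hA'.symm))), fun x => ?_⟩
  rw [LinearIsometryEquiv.orthogonalSum_apply_of_mem_orthogonal _ _
    (hT' ▸ T.range.le_topologicalClosure (LinearMap.mem_range_self _ x))]
  exact he x

end InnerProduct

theorem ContinuousLinearMap.norm_sqrt_adjoint_comp_self_apply {E F : Type*}
    [NormedAddCommGroup E] [InnerProductSpace ℂ E] [CompleteSpace E]
    [NormedAddCommGroup F] [InnerProductSpace ℂ F] [CompleteSpace F] (A : E →L[ℂ] F) (x : E) :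
    ‖CFC.sqrt (adjoint A ∘L A) x‖ = ‖A x‖ := by
  refine norm_apply_eq_of_adjoint_comp_self_eq ?_ x
  rw [(CFC.sqrt_nonneg _).isSelfAdjoint.adjoint_eq]
  exact CFC.sqrt_mul_sqrt_self _ ((nonneg_iff_isPositive _).2 (isPositive_adjoint_comp_self A))

theorem stmt_9_general {H K : Type*} [NormedAddCommGroup H] [InnerProductSpace ℂ H]
    [CompleteSpace H]
    [NormedAddCommGroup K] [InnerProductSpace ℂ K]
    [CompleteSpace K]
    (A : H →L[ℂ] K) :
    (∃ U : K →L[ℂ] H,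
        U ∘L ContinuousLinearMap.adjoint U = ContinuousLinearMap.id ℂ H ∧
        ContinuousLinearMap.adjoint U ∘L U = ContinuousLinearMap.id ℂ K ∧
        IsSelfAdjoint (U ∘L A)) ↔
      Nonempty ((LinearMap.ker (A : H →ₗ[ℂ] K) : Submodule ℂ H) ≃ₗᵢ[ℂ]
        (LinearMap.ker ((ContinuousLinearMap.adjoint A : K →L[ℂ] H) : K →ₗ[ℂ] H) : Submodule ℂ K)) := by
  constructor
  · rintro ⟨U, h₁, h₂, hUA⟩
    let W := U.linearIsometryEquivOfUnitary h₁ h₂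
    exact ⟨(W.symm.submoduleMap A.ker).trans
      (LinearIsometryEquiv.ofEq _ _ (W.map_ker_symm_eq_ker_adjoint hUA))⟩
  · rintro ⟨φ⟩
    obtain ⟨W, hW⟩ := exists_linearIsometryEquiv_apply_eq_of_norm_eq
      (CFC.sqrt_nonneg (adjoint A ∘L A)).isSelfAdjoint (norm_sqrt_adjoint_comp_self_apply A) φ
    have hUA : (W.symm : K →L[ℂ] H) ∘L A = CFC.sqrt (adjoint A ∘L A) := by
      ext x
      simp [← hW]
    refine ⟨W.symm, ?_, ?_, hUA ▸ (CFC.sqrt_nonneg _).isSelfAdjoint⟩ <;>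
    · rw [W.symm.adjoint_eq_symm, W.symm_symm]
      ext
      simp

theorem stmt_9 {H K : Type*} [NormedAddCommGroup H] [InnerProductSpace ℂ H]
    [CompleteSpace H] [TopologicalSpace.SeparableSpace H]
    [NormedAddCommGroup K] [InnerProductSpace ℂ K]
    [CompleteSpace K] [TopologicalSpace.SeparableSpace K]
    (A : H →L[ℂ] K) :
    (∃ U : K →L[ℂ] H,
        U ∘L ContinuousLinearMap.adjoint U = ContinuousLinearMap.id ℂ H ∧
        ContinuousLinearMap.adjoint U ∘L U = ContinuousLinearMap.id ℂ K ∧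
        IsSelfAdjoint (U ∘L A)) ↔
      Nonempty ((LinearMap.ker (A : H →ₗ[ℂ] K) : Submodule ℂ H) ≃ₗᵢ[ℂ]
        (LinearMap.ker ((ContinuousLinearMap.adjoint A : K →L[ℂ] H) : K →ₗ[ℂ] H) : Submodule ℂ K)) :=
  stmt_9_general A
end

section
/- Let H be a separable complex Hilbert space and let P be a bounded idempotent operator on H. Then there exists a symmetry J with JPJ = I - P if and only if there exists a symmetry J' with J'PJ' = I - P*. (Equivalently, the set Γ_P is nonempty if and only if the set Δ_P is nonempty.) -/
open ContinuousLinearMap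

variable {H : Type*} [NormedAddCommGroup H] [InnerProductSpace ℂ H]
  [CompleteSpace H] [TopologicalSpace.SeparableSpace H]

lemma commute_cfc_aux {X A : H →L[ℂ] H} (hA : IsSelfAdjoint A) (hc : Commute X A)
    (f : ℝ → ℝ) : Commute X (cfc f A) := by
  by_cases hf : ContinuousOn f (spectrum ℝ A)
  · rw [cfc_apply f A hA hf]
    generalize (⟨_, hf.restrict⟩ : C(spectrum ℝ A, ℝ)) = g
    induction g using ContinuousMap.induction_on_of_compact with
    | const r =>
      have : (ContinuousMap.const (spectrum ℝ A) r) =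
          algebraMap ℝ C(spectrum ℝ A, ℝ) r := rfl
      rw [this, AlgHomClass.commutes]
      exact (Algebra.commutes r X).symm
    | id => rw [cfcHom_id hA]; exact hc
    | star_id => rw [map_star, cfcHom_id hA, hA.star_eq]; exact hc
    | add f g hf hg => rw [map_add]; exact hf.add_right hg
    | mul f g hf hg => rw [map_mul]; exact hf.mul_right hg
    | frequently f hf =>
      have hcl : IsClosed {g : C(spectrum ℝ A, ℝ) | Commute X (cfcHom hA g)} := by
        have hcont : Continuous (cfcHom hA : C(spectrum ℝ A, ℝ) →⋆ₐ[ℝ] (H →L[ℂ] H)) :=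
          cfcHom_continuous hA
        exact isClosed_eq (continuous_const.mul hcont) (hcont.mul continuous_const)
      exact hcl.closure_subset (mem_closure_iff_frequently.mpr hf)
  · rw [cfc_apply_of_not_continuousOn A hf]
    exact Commute.zero_right X

theorem stmt_11 (P : H →L[ℂ] H) (hP : P * P = P) :
    (∃ J, IsSymmetry J ∧ J * P * J = 1 - P) ↔
      (∃ J', IsSymmetry J' ∧ J' * P * J' = 1 - star P) := by
  have hQ : star P * star P = star P := by
    have := congrArg star hP
    rwa [star_mul] at this
  set G : H →L[ℂ] H := P + star P - 1 with hGdef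
  have hGsa : IsSelfAdjoint G := by
    rw [isSelfAdjoint_iff, hGdef]
    simp only [star_sub, star_add, star_star, star_one]
    abel
  have hGGsa : IsSelfAdjoint (G * G) := by
    rw [isSelfAdjoint_iff, star_mul, hGsa.star_eq]
  have e1 : (P + star P - 1) * (P + star P - 1) =
      1 + (P - star P) * (star P - P) + ((P * P - P) + (P * P - P)
        + ((star P * star P - star P) + (star P * star P - star P))) := by
    noncomm_ring
  rw [hP, hQ] at e1
  simp only [sub_self, add_zero] at e1
  have hpos : (0 : H →L[ℂ] H) ≤ (P - star P) * (star P - P) := by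
    have := mul_star_self_nonneg (P - star P)
    rwa [star_sub, star_star] at this
  have h1le : (1 : H →L[ℂ] H) ≤ G * G := by
    rw [hGdef, e1]; exact le_add_of_nonneg_right hpos
  have hspec : ∀ x ∈ spectrum ℝ (G * G), 1 ≤ x :=
    (CFC.one_le_iff (R := ℝ) (G * G) hGGsa).mp h1le
  have hfc : ContinuousOn (fun x : ℝ => (Real.sqrt x)⁻¹) (spectrum ℝ (G * G)) := by
    apply ContinuousOn.inv₀ Real.continuous_sqrt.continuousOn
    intro x hx
    have h1 := hspec x hx
    have h0 : (0 : ℝ) < x := by linarith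
    exact ne_of_gt (Real.sqrt_pos.mpr h0)
  set B := cfc (fun x : ℝ => (Real.sqrt x)⁻¹) (G * G) with hBdef
  have hBsa : IsSelfAdjoint B := cfc_predicate _ (G * G)
  have hcomm : ∀ X : H →L[ℂ] H, X * (G * G) = (G * G) * X → X * B = B * X := by
    intro X h
    have := (commute_cfc_aux hGGsa h (fun x : ℝ => (Real.sqrt x)⁻¹)).eq
    rw [← hBdef] at this
    exact this
  have hGB : G * B = B * G := hcomm G (mul_assoc G G G).symm
  have h1 : cfc (fun x : ℝ => (Real.sqrt x)⁻¹) (G * G) * cfc (fun x : ℝ => (Real.sqrt x)⁻¹) (G * G)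
      = cfc (fun x : ℝ => (Real.sqrt x)⁻¹ * (Real.sqrt x)⁻¹) (G * G) :=
    (cfc_mul _ _ (G * G) hfc hfc).symm
  have h2 : cfc (fun x : ℝ => (Real.sqrt x)⁻¹ * (Real.sqrt x)⁻¹) (G * G) * (G * G)
      = cfc (fun x : ℝ => (Real.sqrt x)⁻¹ * (Real.sqrt x)⁻¹ * x) (G * G) := by
    nth_rewrite 2 [← cfc_id' ℝ (G * G) hGGsa]
    exact (cfc_mul _ _ (G * G) (hfc.mul hfc) (by fun_prop)).symm
  have h3 : cfc (fun x : ℝ => (Real.sqrt x)⁻¹ * (Real.sqrt x)⁻¹ * x) (G * G)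
      = cfc (fun _ : ℝ => (1 : ℝ)) (G * G) := by
    apply cfc_congr
    intro x hx
    have h1x := hspec x hx
    have h0 : (0 : ℝ) < x := by linarith
    have hs : Real.sqrt x * Real.sqrt x = x := Real.mul_self_sqrt h0.le
    show (Real.sqrt x)⁻¹ * (Real.sqrt x)⁻¹ * x = 1
    rw [← mul_inv, hs, inv_mul_cancel₀ (ne_of_gt h0)]
  have hBB : B * B * (G * G) = 1 := by
    rw [hBdef, h1, h2, h3]
    exact cfc_one ℝ (G * G)
  have hPGG : P * (G * G) = (G * G) * P := by
    have e2 : P * ((P + star P - 1) * (P + star P - 1))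
        - ((P + star P - 1) * (P + star P - 1)) * P
        = ((P * P - P) * star P + P * (star P * star P - star P))
          - (star P * (P * P - P) + (star P * star P - star P) * P) := by noncomm_ring
    rw [hP, hQ] at e2
    simp only [sub_self, zero_mul, mul_zero, add_zero, zero_add, sub_zero] at e2
    rw [hGdef]
    exact sub_eq_zero.mp e2
  have hPB : P * B = B * P := hcomm P hPGG
  have hGPG : G * P * G = star P * (G * G) := by
    have e3 : (P + star P - 1) * P * (P + star P - 1)
        - star P * ((P + star P - 1) * (P + star P - 1))
        = (((P * P - P) * P - (P * P - P)) + (P * P - P) * star P)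
          - (((star P * star P - star P) * star P - (star P * star P - star P))
            + (star P * star P - star P) * P) := by noncomm_ring
    rw [hP, hQ] at e3
    simp only [sub_self, zero_mul, mul_zero, zero_sub, sub_zero, add_zero, zero_add,
      neg_zero] at e3
    rw [hGdef]
    exact sub_eq_zero.mp e3
  have cGB : Commute G B := hGB
  have cGGB : Commute (G * G) B := cGB.mul_left cGB
  have cGGBB : Commute (G * G) (B * B) := cGGB.mul_right cGGB
  have hGGBB1 : (G * G) * (B * B) = 1 := by rw [cGGBB.eq]; exact hBB
  obtain ⟨K, hKdef⟩ : ∃ K : H →L[ℂ] H, K = G * B := ⟨_, rfl⟩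
  have hKsa : IsSelfAdjoint K := by
    rw [isSelfAdjoint_iff, hKdef, star_mul, hBsa.star_eq, hGsa.star_eq, hGB]
  have hK2 : K * K = 1 := by
    calc K * K = G * (B * G) * B := by rw [hKdef]; noncomm_ring
      _ = G * (G * B) * B := by rw [← hGB]
      _ = (G * G) * (B * B) := by noncomm_ring
      _ = 1 := hGGBB1
  have hKP : K * P * K = star P := by
    calc K * P * K = G * (B * P) * (G * B) := by rw [hKdef]; noncomm_ring
      _ = G * (P * B) * (G * B) := by rw [← hPB]
      _ = (G * P) * (B * G) * B := by noncomm_ring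
      _ = (G * P) * (G * B) * B := by rw [← hGB]
      _ = (G * P * G) * (B * B) := by noncomm_ring
      _ = star P * ((G * G) * (B * B)) := by rw [hGPG]; noncomm_ring
      _ = star P := by rw [hGGBB1, mul_one]
  have hKQ : K * star P * K = P := by
    have h := congrArg (fun X => K * X * K) hKP
    rw [← h]
    calc K * (K * P * K) * K = (K * K) * P * (K * K) := by noncomm_ring
      _ = P := by rw [hK2, one_mul, mul_one]
  have hmain : ∀ J : H →L[ℂ] H, IsSelfAdjoint J → J * J = 1 → J * G = -(G * J) →
      IsSymmetry (Complex.I • (K * J)) ∧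
      (Complex.I • (K * J)) * P * (Complex.I • (K * J)) = K * (J * P * J) * K := by
    intro J hJsa hJ2 hJG
    have hJGG : J * (G * G) = (G * G) * J := by
      calc J * (G * G) = (J * G) * G := by rw [mul_assoc]
        _ = (-(G * J)) * G := by rw [hJG]
        _ = -(G * (J * G)) := by noncomm_ring
        _ = -(G * (-(G * J))) := by rw [hJG]
        _ = (G * G) * J := by noncomm_ring
    have hJB : J * B = B * J := hcomm J hJGG
    have hJK : J * K = -(K * J) := by
      calc J * K = (J * G) * B := by rw [hKdef, mul_assoc]
        _ = (-(G * J)) * B := by rw [hJG]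
        _ = -(G * (J * B)) := by noncomm_ring
        _ = -(G * (B * J)) := by rw [hJB]
        _ = -(K * J) := by rw [hKdef]; noncomm_ring
    have hKJ : K * J = -(J * K) := by rw [hJK, neg_neg]
    have hsq : (K * J) * (K * J) = -1 := by
      calc (K * J) * (K * J) = K * (J * K) * J := by noncomm_ring
        _ = K * (-(K * J)) * J := by rw [hJK]
        _ = -((K * K) * (J * J)) := by noncomm_ring
        _ = -1 := by rw [hK2, hJ2, mul_one]
    refine ⟨⟨?_, ?_⟩, ?_⟩
    · rw [isSelfAdjoint_iff, star_smul, star_mul, hJsa.star_eq, hKsa.star_eq, hJK]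
      simp [Complex.star_def, Complex.conj_I, smul_neg, neg_smul]
    · rw [smul_mul_assoc, mul_smul_comm, smul_smul, Complex.I_mul_I, hsq]
      simp
    · simp only [smul_mul_assoc, mul_smul_comm, smul_smul]
      rw [Complex.I_mul_I]
      have hin : (K * J) * P * (K * J) = -(K * (J * P * J) * K) := by
        calc (K * J) * P * (K * J) = K * ((J * P) * (K * J)) := by noncomm_ring
          _ = K * ((J * P) * (-(J * K))) := by rw [hKJ]
          _ = -(K * (J * P * J) * K) := by noncomm_ring
      rw [hin]
      simp
  constructor
  · rintro ⟨J, ⟨hJsa, hJ2⟩, hJP⟩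
    have hJQ : J * star P * J = 1 - star P := by
      have h := congrArg star hJP
      rw [star_sub, star_one, star_mul, star_mul, hJsa.star_eq, ← mul_assoc] at h
      exact h
    have hJG : J * G = -(G * J) := by
      have e4 : J * G * J = J * P * J + J * star P * J - J * J := by
        rw [hGdef]; noncomm_ring
      rw [hJP, hJQ, hJ2] at e4
      have e5 : J * G * J = -G := by rw [e4, hGdef]; noncomm_ring
      have e6 : J * G = J * G * J * J := by rw [mul_assoc (J * G) J J, hJ2, mul_one]
      rw [e5] at e6
      rw [e6]
      exact neg_mul G J
    obtain ⟨hsym, hconj⟩ := hmain J hJsa hJ2 hJG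
    refine ⟨_, hsym, ?_⟩
    rw [hconj, hJP]
    calc K * (1 - P) * K = K * K - K * P * K := by noncomm_ring
      _ = 1 - star P := by rw [hK2, hKP]
  · rintro ⟨J, ⟨hJsa, hJ2⟩, hJP⟩
    have hJQ : J * star P * J = 1 - P := by
      have h := congrArg star hJP
      rw [star_sub, star_one, star_star, star_mul, star_mul, hJsa.star_eq, ← mul_assoc] at h
      exact h
    have hJG : J * G = -(G * J) := by
      have e4 : J * G * J = J * P * J + J * star P * J - J * J := by
        rw [hGdef]; noncomm_ring
      rw [hJP, hJQ, hJ2] at e4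
      have e5 : J * G * J = -G := by rw [e4, hGdef]; noncomm_ring
      have e6 : J * G = J * G * J * J := by rw [mul_assoc (J * G) J J, hJ2, mul_one]
      rw [e5] at e6
      rw [e6]
      exact neg_mul G J
    obtain ⟨hsym, hconj⟩ := hmain J hJsa hJ2 hJG
    refine ⟨_, hsym, ?_⟩
    rw [hconj, hJP]
    calc K * (1 - star P) * K = K * K - K * star P * K := by noncomm_ring
      _ = 1 - P := by rw [hK2, hKQ]
end

section
/- Let H be a separable complex Hilbert space, let P be a bounded idempotent operator on H, and let J be a symmetry with JPJ = I - P*. Then the Hilbert space dimension of the range of P equals the Hilbert space dimension of its orthogonal complement, and J is anti-diagonal with respect to the decomposition H = R(P) ⊕ R(P)^⊥; that is, writing Q for the orthogonal projection onto R(P), one has Q J Q = 0 and (I - Q) J (I - Q) = 0. -/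
/-!
Conjugation by the involution `J` turns `P` into the idempotent `1 - P*`, whose range is
`ker P* = R(P)ᗮ`. As `J` is surjective, `J` therefore maps `R(P)` onto `R(P)ᗮ`, and, since
`J² = 1`, maps `R(P)ᗮ` back onto `R(P)`. A self-adjoint involution is unitary, so `J` restricts
to an isometry `R(P) ≃ R(P)ᗮ`; and an operator exchanging `R(Q) = R(P)` with `ker Q = R(P)ᗮ`
has vanishing diagonal blocks `QJQ` and `(1 - Q)J(1 - Q)`.
-/

open ContinuousLinearMap

variable {H : Type*} [NormedAddCommGroup H] [InnerProductSpace ℂ H]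
  [CompleteSpace H] [TopologicalSpace.SeparableSpace H]

namespace ContinuousLinearMap

section Ring

variable {R M : Type*} [Ring R] [TopologicalSpace M] [AddCommGroup M] [Module R M]

theorem mul_mul_eq_zero_of_map_range_le_ker {A T B : M →L[R] M}
    (h : (LinearMap.range (B : M →ₗ[R] M)).map (T : M →ₗ[R] M) ≤
      LinearMap.ker (A : M →ₗ[R] M)) :
    A * T * B = 0 := by
  ext x
  exact h ⟨B x, ⟨x, rfl⟩, rfl⟩

variable {J : M →L[R] M}

theorem map_range_eq_range_mul_mul_of_mul_self_eq_one (hJ : J * J = 1) (P : M →L[R] M) :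
    (LinearMap.range (P : M →ₗ[R] M)).map (J : M →ₗ[R] M) =
      LinearMap.range ((J * P * J : M →L[R] M) : M →ₗ[R] M) := by
  have hJsurj : Function.Surjective J := fun x => ⟨J x, congr($hJ x)⟩
  rw [toLinearMap_mul, toLinearMap_mul, Module.End.mul_eq_comp, Module.End.mul_eq_comp,
    LinearMap.range_comp_of_range_eq_top _ (LinearMap.range_eq_top.mpr hJsurj),
    LinearMap.range_comp]

theorem map_map_of_mul_self_eq_one (hJ : J * J = 1) (N : Submodule R M) :
    (N.map (J : M →ₗ[R] M)).map (J : M →ₗ[R] M) = N := by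
  rw [← Submodule.map_comp, ← Module.End.mul_eq_comp, ← toLinearMap_mul, hJ, toLinearMap_one,
    Module.End.one_eq_id, Submodule.map_id]

end Ring

variable {𝕜 E : Type*} [RCLike 𝕜] [NormedAddCommGroup E] [InnerProductSpace 𝕜 E]
  [CompleteSpace E]

theorem range_one_sub_star_eq_orthogonal {P : E →L[𝕜] E} (hP : IsIdempotentElem P) :
    LinearMap.range ((1 - star P : E →L[𝕜] E) : E →ₗ[𝕜] E) =
      (LinearMap.range (P : E →ₗ[𝕜] E))ᗮ := by
  have hPstar : IsIdempotentElem ((star P : E →L[𝕜] E) : E →ₗ[𝕜] E) :=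
    (IsIdempotentElem.star_iff.mpr hP).toLinearMap
  rw [toLinearMap_sub, toLinearMap_one, ← LinearMap.IsIdempotentElem.ker_eq_range_one_sub hPstar,
    star_eq_adjoint]
  exact (orthogonal_range P).symm

theorem map_range_eq_orthogonal_of_mul_mul_eq_one_sub_star {P J : E →L[𝕜] E}
    (hP : IsIdempotentElem P) (hJ : J * J = 1) (hJP : J * P * J = 1 - star P) :
    (LinearMap.range (P : E →ₗ[𝕜] E)).map (J : E →ₗ[𝕜] E) =
      (LinearMap.range (P : E →ₗ[𝕜] E))ᗮ := by
  rw [map_range_eq_range_mul_mul_of_mul_self_eq_one hJ, hJP, range_one_sub_star_eq_orthogonal hP]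

theorem IsStarProjection.ker_eq_orthogonal_range {Q : E →L[𝕜] E} (hQ : IsStarProjection Q) :
    LinearMap.ker (Q : E →ₗ[𝕜] E) = (LinearMap.range (Q : E →ₗ[𝕜] E))ᗮ := by
  rw [orthogonal_range, ← star_eq_adjoint, hQ.isSelfAdjoint.star_eq]

end ContinuousLinearMap

theorem stmt_12 (P J Q : H →L[ℂ] H) (hP : P * P = P) (hJ : IsSymmetry J)
    (hJP : J * P * J = 1 - star P)
    (hQ : IsOrthoProjOnto Q (LinearMap.range (P : H →ₗ[ℂ] H))) :
    Nonempty ((LinearMap.range (P : H →ₗ[ℂ] H) : Submodule ℂ H) ≃ₗᵢ[ℂ]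
      ((LinearMap.range (P : H →ₗ[ℂ] H))ᗮ : Submodule ℂ H)) ∧
    Q * J * Q = 0 ∧ (1 - Q) * J * (1 - Q) = 0 := by
  obtain ⟨hJsa, hJJ⟩ := hJ
  obtain ⟨hQsa, hQQ, hQP⟩ := hQ
  set M := LinearMap.range (P : H →ₗ[ℂ] H)
  have hQproj : IsStarProjection Q := ⟨hQQ, hQsa⟩
  have hJM : M.map (J : H →ₗ[ℂ] H) = Mᗮ :=
    map_range_eq_orthogonal_of_mul_mul_eq_one_sub_star hP hJJ hJP
  have hJMperp : Mᗮ.map (J : H →ₗ[ℂ] H) = M := hJM ▸ map_map_of_mul_self_eq_one hJJ M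
  have hkerQ : LinearMap.ker (Q : H →ₗ[ℂ] H) = Mᗮ := hQP ▸ hQproj.ker_eq_orthogonal_range
  have hJunitary : J ∈ unitary (H →L[ℂ] H) := by
    rw [Unitary.mem_iff, hJsa.star_eq]; exact ⟨hJJ, hJJ⟩
  let U : H ≃ₗᵢ[ℂ] H := Unitary.linearIsometryEquiv ⟨J, hJunitary⟩
  refine ⟨⟨(LinearIsometryEquiv.submoduleMap M U).trans (LinearIsometryEquiv.ofEq _ _ hJM)⟩,
    ?_, ?_⟩
  · exact mul_mul_eq_zero_of_map_range_le_ker (by rw [hQP, hkerQ, hJM])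
  · have hQidem := hQproj.isIdempotentElem.toLinearMap
    refine mul_mul_eq_zero_of_map_range_le_ker ?_
    rw [toLinearMap_sub, toLinearMap_one,
      ← LinearMap.IsIdempotentElem.ker_eq_range_one_sub hQidem,
      ← LinearMap.IsIdempotentElem.range_eq_ker_one_sub hQidem, hQP, hkerQ, hJMperp]
end

section
/- Let H be a separable complex Hilbert space, let P be a bounded idempotent operator on H, and let J be a symmetry with JPJ = I - P*. Then there exist unique symmetries J₁ and J₂ such that J₁PJ₁ = I - P, J₂P ≥ 0, and J = -i J₁ J₂ = i J₂ J₁ (where i = √(-1)). -/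
/-!
`B = P + P* - 1` is self-adjoint with `B² = 1 + |P - P*|² ≥ 1`, so `B` is invertible
and `J₂ = sgn B = B (B²)^(-1/2)` is a symmetry. Since `BP = P*P` and `P` commutes with `B²`,
`J₂P = P*P (B²)^(-1/2)` is a product of commuting positive elements, hence positive.
The relation `JPJ = 1 - P*` makes `J` anticommute with `B`, hence with `J₂`, and `J₁ = iJJ₂`
is then a symmetry with `J₁PJ₁ = 1 - P`.

For uniqueness: `J₂P ≥ 0` forces `J₂P = |P|`, and the two formulas for `J` amount to
`J₁ = iJJ₂` together with `J₂J = -JJ₂`. Then `J₂` is also determined on the complement,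
since `J₂(1 - P*) = J₂JPJ = -J(J₂P)J`, and an element killed by both `P` and `1 - P*`
vanishes.
-/

open ContinuousLinearMap

variable {H : Type*} [NormedAddCommGroup H] [InnerProductSpace ℂ H]
  [CompleteSpace H] [TopologicalSpace.SeparableSpace H]

open CFC

section Idempotent

variable {R : Type*} [Ring R] [StarRing R] {p : R}

lemma add_star_sub_one_mul_of_isIdempotentElem (hp : IsIdempotentElem p) :
    (p + star p - 1) * p = star p * p := by
  calc (p + star p - 1) * p = star p * p + (p * p - p) := by noncomm_ring
  _ = star p * p := by rw [hp.eq, sub_self, add_zero]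

lemma mul_add_star_sub_one_of_isIdempotentElem (hp : IsIdempotentElem p) :
    p * (p + star p - 1) = p * star p := by
  calc p * (p + star p - 1) = p * star p + (p * p - p) := by noncomm_ring
  _ = p * star p := by rw [hp.eq, sub_self, add_zero]

lemma add_star_sub_one_mul_self_of_isIdempotentElem (hp : IsIdempotentElem p) :
    (p + star p - 1) * (p + star p - 1) = 1 + star (p - star p) * (p - star p) := by
  calc (p + star p - 1) * (p + star p - 1)
      = 1 + star (p - star p) * (p - star p) + 2 * (p * p - p)
        + 2 * (star p * star p - star p) := by
        rw [star_sub, star_star]; noncomm_ring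
  _ = 1 + star (p - star p) * (p - star p) := by
        rw [hp.eq, hp.star.eq, sub_self, sub_self, mul_zero, add_zero, add_zero]

lemma commute_add_star_sub_one_mul_self_of_isIdempotentElem (hp : IsIdempotentElem p) :
    Commute ((p + star p - 1) * (p + star p - 1)) p := by
  have hB : star p + star (star p) - 1 = p + star p - 1 := by rw [star_star, add_comm]
  have hBp' := add_star_sub_one_mul_of_isIdempotentElem hp.star
  have hp'B := mul_add_star_sub_one_of_isIdempotentElem hp.star
  rw [hB, star_star] at hBp' hp'B
  calc (p + star p - 1) * (p + star p - 1) * p = (p + star p - 1) * star p * p := by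
        rw [mul_assoc, add_star_sub_one_mul_of_isIdempotentElem hp, mul_assoc]
  _ = p * star p * (p + star p - 1) := by
        rw [hBp', mul_assoc, mul_assoc, hp'B]
  _ = p * ((p + star p - 1) * (p + star p - 1)) := by
        rw [← mul_add_star_sub_one_of_isIdempotentElem hp, mul_assoc]

end Idempotent

section StarRing

variable {R : Type*} [Ring R] [StarRing R] {j p u : R}

lemma conj_star_eq_of_conj_eq (hj : IsSelfAdjoint j) (hjp : j * p * j = 1 - star p) :
    j * star p * j = 1 - p := by
  simpa [mul_assoc, hj.star_eq] using congrArg star hjp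

lemma add_star_sub_one_mul_eq_neg (hj : IsSelfAdjoint j) (hj2 : j * j = 1)
    (hjp : j * p * j = 1 - star p) : (p + star p - 1) * j = -(j * (p + star p - 1)) := by
  have hconj : j * (p + star p - 1) * j = -(p + star p - 1) := by
    calc j * (p + star p - 1) * j = j * p * j + j * star p * j - j * j := by noncomm_ring
    _ = -(p + star p - 1) := by
        rw [hjp, conj_star_eq_of_conj_eq hj hjp, hj2]; noncomm_ring
  calc (p + star p - 1) * j = j * (j * (p + star p - 1) * j) := by
        rw [← mul_assoc, ← mul_assoc, hj2, one_mul]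
  _ = -(j * (p + star p - 1)) := by rw [hconj, mul_neg]

lemma conj_eq_star_of_isSelfAdjoint_mul (hu : IsSelfAdjoint u) (hu2 : u * u = 1)
    (h : IsSelfAdjoint (u * p)) : u * p * u = star p := by
  rw [← h.star_eq, star_mul, hu.star_eq, mul_assoc, hu2, mul_one]

end StarRing

section CStarRing

variable {E : Type*} [NormedRing E] [StarRing E] [CStarRing E] {d j p u v : E}

lemma eq_zero_of_mul_eq_zero_of_mul_star_eq_self (h₁ : d * p = 0) (h₂ : d * star p = d) :
    d = 0 := by
  have h : star d = p * star d := by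
    conv_lhs => rw [← h₂, star_mul, star_star]
  rw [← CStarRing.mul_star_self_eq_zero_iff, h, ← mul_assoc, h₁, zero_mul]

lemma eq_of_mul_eq_of_anticommute (hjp : j * p * j = 1 - star p)
    (hu : u * j = -(j * u)) (hv : v * j = -(j * v)) (h : u * p = v * p) : u = v := by
  have hd : (u - v) * p = 0 := by rw [sub_mul, h, sub_self]
  have hdj : (u - v) * j = -(j * (u - v)) := by rw [sub_mul, hu, hv, mul_sub]; abel
  refine sub_eq_zero.mp (eq_zero_of_mul_eq_zero_of_mul_star_eq_self hd ?_)
  calc (u - v) * star p = (u - v) - (u - v) * (j * p * j) := by rw [hjp]; noncomm_ring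
  _ = (u - v) + j * ((u - v) * p) * j := by rw [← mul_assoc, ← mul_assoc, hdj]; noncomm_ring
  _ = u - v := by rw [hd, mul_zero, zero_mul, add_zero]

end CStarRing

section CStarAlgebra

variable {A : Type*} [CStarAlgebra A] [PartialOrder A] [StarOrderedRing A] {a b c j : A}

lemma isUnit_add_star_sub_one_of_isIdempotentElem {p : A} (hp : IsIdempotentElem p) :
    IsUnit (p + star p - 1) := by
  have h1 : (1 : A) ≤ (p + star p - 1) * (p + star p - 1) := by
    rw [add_star_sub_one_mul_self_of_isIdempotentElem hp]
    exact le_add_of_nonneg_right (star_mul_self_nonneg _)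
  exact ((Commute.refl _).isUnit_mul_iff.mp (CStarAlgebra.isUnit_of_le 1 h1)).1

lemma Commute.cfcRpow (h : Commute a c) (y : ℝ) : Commute (a ^ y) c :=
  h.cfc_nnreal _

-- For invertible self-adjoint `b` this is the sign `b |b|⁻¹` of `b`.
noncomputable def sgn (b : A) : A := b * (b * b) ^ (-(1 / 2) : ℝ)

lemma commute_rpow_mul_self (b : A) (y : ℝ) : Commute ((b * b) ^ y) b :=
  ((Commute.refl b).mul_left (Commute.refl b)).cfcRpow y

lemma isSelfAdjoint_sgn (hb : IsSelfAdjoint b) : IsSelfAdjoint (sgn b) := by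
  rw [IsSelfAdjoint, sgn, star_mul, hb.star_eq, rpow_nonneg.isSelfAdjoint.star_eq,
    (commute_rpow_mul_self b _).eq]

lemma sgn_mul_self (hb : IsSelfAdjoint b) (hbu : IsUnit b) : sgn b * sgn b = 1 := by
  calc sgn b * sgn b = (b * b) ^ (-(1 / 2) : ℝ) * (b * b) * (b * b) ^ (-(1 / 2) : ℝ) := by
        simp only [sgn, ← (commute_rpow_mul_self b _).eq, mul_assoc]
  _ = 1 := conjugate_rpow_neg_one_half _ ((hbu.mul hbu).isStrictlyPositive hb.mul_self_nonneg)

lemma sgn_mul_nonneg (hbc : 0 ≤ b * c) (hc : Commute (b * b) c) : 0 ≤ sgn b * c := by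
  have hS := hc.cfcRpow (-(1 / 2))
  rw [sgn, mul_assoc, hS.eq, ← mul_assoc]
  exact Commute.mul_nonneg hbc rpow_nonneg ((commute_rpow_mul_self b _).mul_right hS).symm

lemma sgn_mul_eq_neg (h : b * j = -(j * b)) : sgn b * j = -(j * sgn b) := by
  have hbb : Commute (b * b) j := by
    rw [Commute, SemiconjBy, mul_assoc, h, mul_neg, ← mul_assoc, h]; noncomm_ring
  rw [sgn, mul_assoc, (hbb.cfcRpow _).eq, ← mul_assoc, h]
  noncomm_ring

lemma mul_eq_cfcAbs (hb : IsSelfAdjoint b) (hb2 : b * b = 1) (h : 0 ≤ b * c) :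
    b * c = CFC.abs c := by
  refine (CFC.sqrt_unique ?_ h).symm
  calc b * c * (b * c) = star (b * c) * (b * c) := by rw [h.isSelfAdjoint.star_eq]
  _ = star c * c := by rw [star_mul, hb.star_eq, mul_assoc, ← mul_assoc b, hb2, one_mul]

end CStarAlgebra

section ComplexStarAlgebra

open Complex

variable {R : Type*} [Ring R] [Algebra ℂ R] {j k p u : R}

lemma eq_neg_I_smul_mul_and_eq_I_smul_mul_iff (hu : u * u = 1) :
    (j = -(I • (k * u)) ∧ j = I • (u * k)) ↔ (k = I • (j * u) ∧ u * j = -(j * u)) := by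
  constructor
  · rintro ⟨h₁, h₂⟩
    constructor
    · rw [h₁, neg_mul, smul_mul_assoc, mul_assoc, hu, mul_one, smul_neg, smul_smul, I_mul_I,
        neg_one_smul, neg_neg]
    · calc u * j = I • k := by rw [h₂, mul_smul_comm, ← mul_assoc, hu, one_mul]
      _ = -(j * u) := by rw [h₁, neg_mul, neg_neg, smul_mul_assoc, mul_assoc, hu, mul_one]
  · rintro ⟨rfl, h⟩
    constructor
    · rw [smul_mul_assoc, mul_assoc, hu, mul_one, smul_smul, I_mul_I, neg_one_smul, neg_neg]
    · rw [mul_smul_comm, ← mul_assoc, h, neg_mul, mul_assoc, hu, mul_one, smul_neg, smul_neg,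
        smul_smul, I_mul_I, neg_one_smul, neg_neg]

lemma isSelfAdjoint_I_smul_mul [StarRing R] [StarModule ℂ R] (hj : IsSelfAdjoint j)
    (hu : IsSelfAdjoint u) (h : u * j = -(j * u)) : IsSelfAdjoint (I • (j * u)) := by
  rw [IsSelfAdjoint, star_smul, star_mul, hj.star_eq, hu.star_eq, h, Complex.star_def, conj_I,
    neg_smul, smul_neg, neg_neg]

lemma I_smul_mul_mul_self (hj : j * j = 1) (hu : u * u = 1) (h : u * j = -(j * u)) :
    I • (j * u) * (I • (j * u)) = 1 := by
  calc I • (j * u) * (I • (j * u)) = -(j * (u * j) * u) := by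
        rw [smul_mul_smul_comm, I_mul_I, neg_one_smul]; noncomm_ring
  _ = 1 := by rw [h, mul_neg, neg_mul, neg_neg, ← mul_assoc, hj, one_mul, hu]

lemma I_smul_mul_conj [StarRing R] (hjp : j * star p * j = 1 - p) (hup : u * p * u = star p)
    (h : u * j = -(j * u)) : I • (j * u) * p * (I • (j * u)) = 1 - p := by
  calc I • (j * u) * p * (I • (j * u)) = -(j * (u * p * (j * u))) := by
        rw [smul_mul_assoc, smul_mul_smul_comm, I_mul_I, neg_one_smul]; noncomm_ring
  _ = 1 - p := by
        rw [← neg_neg (j * u), ← h, mul_neg, mul_neg, neg_neg, ← mul_assoc (u * p), hup,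
          ← mul_assoc, hjp]

end ComplexStarAlgebra

theorem stmt_14 (P J : H →L[ℂ] H) (hP : P * P = P) (hJ : IsSymmetry J)
    (hJP : J * P * J = 1 - star P) :
    ∃! p : (H →L[ℂ] H) × (H →L[ℂ] H),
      IsSymmetry p.1 ∧ IsSymmetry p.2 ∧ p.1 * P * p.1 = 1 - P ∧ (p.2 * P).IsPositive ∧
      J = -(Complex.I • (p.1 * p.2)) ∧ J = Complex.I • (p.2 * p.1) := by
  obtain ⟨hJsa, hJ2⟩ := hJ
  have hB : IsSelfAdjoint (P + star P - 1) := (IsSelfAdjoint.add_star_self P).sub (.one _)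
  set U := sgn (P + star P - 1)
  have hUsa : IsSelfAdjoint U := isSelfAdjoint_sgn hB
  have hU2 : U * U = 1 := sgn_mul_self hB (isUnit_add_star_sub_one_of_isIdempotentElem hP)
  have hUP : 0 ≤ U * P := sgn_mul_nonneg
    (add_star_sub_one_mul_of_isIdempotentElem hP ▸ star_mul_self_nonneg P)
    (commute_add_star_sub_one_mul_self_of_isIdempotentElem hP)
  have hUJ : U * J = -(J * U) := sgn_mul_eq_neg (add_star_sub_one_mul_eq_neg hJsa hJ2 hJP)
  refine ⟨(Complex.I • (J * U), U), ⟨⟨isSelfAdjoint_I_smul_mul hJsa hUsa hUJ,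
    I_smul_mul_mul_self hJ2 hU2 hUJ⟩, ⟨hUsa, hU2⟩,
    I_smul_mul_conj (conj_star_eq_of_conj_eq hJsa hJP)
      (conj_eq_star_of_isSelfAdjoint_mul hUsa hU2 hUP.isSelfAdjoint) hUJ,
    (nonneg_iff_isPositive _).mp hUP,
    (eq_neg_I_smul_mul_and_eq_I_smul_mul_iff hU2).mpr ⟨rfl, hUJ⟩⟩, ?_⟩
  rintro ⟨K₁, K₂⟩ ⟨-, ⟨hK₂, hK₂2⟩, -, hK₂P, hJK⟩
  replace hK₂P : 0 ≤ K₂ * P := (nonneg_iff_isPositive _).mpr hK₂P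
  obtain ⟨hK₁, hK₂J⟩ := (eq_neg_I_smul_mul_and_eq_I_smul_mul_iff hK₂2).mp hJK
  have hK₂P_eq : K₂ * P = U * P := by
    rw [mul_eq_cfcAbs hK₂ hK₂2 hK₂P, mul_eq_cfcAbs hUsa hU2 hUP]
  obtain rfl : K₂ = U := eq_of_mul_eq_of_anticommute hJP hK₂J hUJ hK₂P_eq
  exact Prod.ext hK₁ rfl
end

section
/- Let H be a separable complex Hilbert space, let P be a bounded idempotent operator on H that is not self-adjoint (P ≠ P*), and let J be a symmetry with JPJ = I - P*. Then there do not exist symmetries J₃ and J₄ such that J₃PJ₃ = I - P, J₄P ≥ 0, and J = J₃J₄ = J₄J₃. -/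
open ContinuousLinearMap

variable {H : Type*} [NormedAddCommGroup H] [InnerProductSpace ℂ H]
  [CompleteSpace H] [TopologicalSpace.SeparableSpace H]

theorem stmt_15 (P J : H →L[ℂ] H) (hP : P * P = P) (hP' : P ≠ star P)
    (hJ : IsSymmetry J) (hJP : J * P * J = 1 - star P) :
    ¬ ∃ J₃ J₄ : H →L[ℂ] H,
        IsSymmetry J₃ ∧ IsSymmetry J₄ ∧ J₃ * P * J₃ = 1 - P ∧ (J₄ * P).IsPositive ∧
        J = J₃ * J₄ ∧ J = J₄ * J₃ := by
  rcases subsingleton_or_nontrivial H with hH | hH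
  · exact absurd (Subsingleton.elim P (star P)) hP'
  rintro ⟨J₃, J₄, ⟨h3sa, h3u⟩, ⟨h4sa, h4u⟩, h3P, h4P, hJ1, hJ2⟩
  have hcomm : J₃ * J₄ = J₄ * J₃ := hJ1.symm.trans hJ2
  set A : H →L[ℂ] H := J₄ * P with hAdef
  have hA0 : 0 ≤ A := (nonneg_iff_isPositive A).mpr h4P
  have hAsa : IsSelfAdjoint A := h4P.isSelfAdjoint
  -- A J₄ A = A
  have hAJA : A * J₄ * A = A := by
    have : A * J₄ * A = J₄ * (P * ((J₄ * J₄) * P)) := by rw [hAdef]; noncomm_ring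
    rw [h4u, one_mul, hP] at this
    exact this
  -- ‖J₄‖ = 1 and J₄ ≤ 1
  have hnorm : ‖J₄‖ = 1 := by
    have h := CStarRing.norm_star_mul_self (x := J₄)
    rw [h4sa.star_eq, h4u, norm_one] at h
    nlinarith [norm_nonneg J₄]
  have hJ4le1 : J₄ ≤ 1 := by
    have := IsSelfAdjoint.le_algebraMap_norm_self (a := J₄) h4sa
    rwa [hnorm, map_one] at this
  -- A ≤ J₄
  have hAleJ4 : A ≤ J₄ := by
    have hconj : J₃ * A * J₃ = J₄ - A := by
      have h1 : J₃ * A * J₃ = (J₃ * J₄) * (P * J₃) := by rw [hAdef]; noncomm_ring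
      rw [hcomm] at h1
      have h2 : (J₄ * J₃) * (P * J₃) = J₄ * (J₃ * P * J₃) := by noncomm_ring
      rw [h1, h2, h3P, mul_sub, mul_one]
    have hpos : 0 ≤ J₃ * A * J₃ := by
      have := star_left_conjugate_nonneg hA0 J₃
      rwa [h3sa.star_eq] at this
    rw [hconj] at hpos
    exact sub_nonneg.mp hpos
  have hAle1 : A ≤ 1 := hAleJ4.trans hJ4le1
  -- A ^ 2 ≤ A
  have hA2le : A ^ 2 ≤ A := by
    have := CStarAlgebra.pow_antitone hA0 hAle1 (show (1 : ℕ) ≤ 2 by norm_num)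
    simpa using this
  -- 0 ≤ A (1 - J₄) A = A ^ 2 - A, hence A ^ 2 = A and A (1 - J₄) A = 0
  have hQ0 : 0 ≤ (1 : H →L[ℂ] H) - J₄ := sub_nonneg.mpr hJ4le1
  have hconjQ : 0 ≤ A * (1 - J₄) * A := by
    have := star_left_conjugate_nonneg hQ0 A
    rwa [hAsa.star_eq] at this
  have hid : A * (1 - J₄) * A = A ^ 2 - A := by
    have h1 : A * (1 - J₄) * A = A * A - A * J₄ * A := by noncomm_ring
    rw [h1, hAJA, sq]
  have hA2eq : A ^ 2 = A := le_antisymm hA2le (by rw [hid] at hconjQ; exact sub_nonneg.mp hconjQ)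
  have hzero : A * (1 - J₄) * A = 0 := by rw [hid, hA2eq, sub_self]
  -- (1 - J₄) * A = 0
  have hBA : (1 - J₄) * A = 0 := by
    rw [← CStarRing.star_mul_self_eq_zero_iff ((1 - J₄) * A)]
    have hstar : star ((1 - J₄) * A) = A * (1 - J₄) := by
      rw [star_mul, hAsa.star_eq, star_sub, star_one, h4sa.star_eq]
    rw [hstar]
    have hsq : (1 - J₄) * (1 - J₄) = (1 - J₄) + (1 - J₄) := by
      have : ((1 : H →L[ℂ] H) - J₄) * (1 - J₄) = 1 - J₄ - J₄ + J₄ * J₄ := by noncomm_ring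
      rw [this, h4u]; abel
    calc A * (1 - J₄) * ((1 - J₄) * A)
        = A * ((1 - J₄) * (1 - J₄)) * A := by noncomm_ring
      _ = A * (1 - J₄) * A + A * (1 - J₄) * A := by rw [hsq]; noncomm_ring
      _ = 0 := by rw [hzero]; simp
  -- hence P = A is self-adjoint: contradiction
  have hPA : P = A := by
    have h1 : 1 * A - J₄ * A = 0 := by rw [← sub_mul]; exact hBA
    rw [one_mul] at h1
    have h2 : J₄ * A = (J₄ * J₄) * P := by rw [hAdef]; noncomm_ring
    rw [h4u, one_mul] at h2
    exact ((sub_eq_zero.mp h1).trans h2).symm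
  exact hP' (by rw [hPA, hAsa.star_eq])
end

section
/- Let H be a separable complex Hilbert space, let P be a bounded idempotent operator on H that is not self-adjoint (P ≠ P*), and let J be a symmetry with JP ≥ 0. Then there do not exist symmetries J₁ and J₂ such that J₁PJ₁ = I - P, J₂PJ₂ = I - P*, and J = J₁J₂ = J₂J₁. -/
open ContinuousLinearMap

variable {H : Type*} [NormedAddCommGroup H] [InnerProductSpace ℂ H]
  [CompleteSpace H] [TopologicalSpace.SeparableSpace H]

theorem stmt_16 (P J : H →L[ℂ] H) (hP : P * P = P) (hP' : P ≠ star P)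
    (hJ : IsSymmetry J) (hJP : (J * P).IsPositive) :
    ¬ ∃ J₁ J₂ : H →L[ℂ] H,
        IsSymmetry J₁ ∧ IsSymmetry J₂ ∧ J₁ * P * J₁ = 1 - P ∧ J₂ * P * J₂ = 1 - star P ∧
        J = J₁ * J₂ ∧ J = J₂ * J₁ := by
  rintro ⟨J₁, J₂, hJ₁, hJ₂, h1, h2, h12, h21⟩
  -- J₁ conjugates JP to J(1-P)
  have hadj : (adjoint J₁) = J₁ := by
    rw [← ContinuousLinearMap.star_eq_adjoint]; exact hJ₁.1
  have e0 : J₁ * (J * P) * J₁ = J₂ * (P * J₁) := by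
    rw [h12]
    calc J₁ * (J₁ * J₂ * P) * J₁ = J₁ * J₁ * (J₂ * (P * J₁)) := by noncomm_ring
      _ = J₂ * (P * J₁) := by rw [hJ₁.2, one_mul]
  have key : J * (1 - P) = J₁ ∘L (J * P) ∘L (adjoint J₁) := by
    rw [hadj]
    show J * (1 - P) = J₁ * (J * P) * J₁
    rw [e0, ← h1, h21]
    calc J₂ * J₁ * (J₁ * P * J₁) = J₂ * (J₁ * J₁ * (P * J₁)) := by noncomm_ring
      _ = J₂ * (P * J₁) := by rw [hJ₁.2, one_mul]
  have hBpos : (J * (1 - P)).IsPositive := by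
    rw [key]; exact hJP.conj_adjoint J₁
  have hJpos : J.IsPositive := by
    have : J = J * P + J * (1 - P) := by noncomm_ring
    rw [this]; exact hJP.add hBpos
  have hJ1 : J = 1 := by
    have h0 : (0 : H →L[ℂ] H) ≤ J := (ContinuousLinearMap.nonneg_iff_isPositive J).mpr hJpos
    calc J = CFC.sqrt (J ^ 2) := (CFC.sqrt_sq J h0).symm
      _ = CFC.sqrt 1 := by rw [sq, hJ.2]
      _ = 1 := CFC.sqrt_one
  rw [hJ1, one_mul] at hJP
  exact hP' hJP.isSelfAdjoint.symm
end
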